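/- arXiv:1705.01193 — 4 statements merged into one kernel-verified Lean document; each statement's English description precedes it below -/
import Mathlib

section
/- Assume p + q = 1. Let f ∈ L¹(Ω,μ) with f ≥ 0 μ-a.e. and let f̃ be a boundary extension of f. Then for every t ≥ 0 the function (x,v) ↦ f̃(x − tv, v) is nonnegative μ-a.e. on Ω and ∫_Ω f̃(x − tv, v) μ(d(x,v)) = ∫_Ω f dμ. -/
open MeasureTheory Set Filter Topology

/-- The measure `ℓ(·,v)` on `V` given by
`ℓ(dw,v) = p w v⁻¹ k(w,v) ν(dw) + q δ_v(dw)`. -/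
noncomputable def ell (p q : ℝ) (k : ℝ → ℝ → ℝ) (ν : Measure ℝ) (V : Set ℝ) (v : ℝ) :
    Measure ℝ :=
  (ν.restrict V).withDensity (fun w => ENNReal.ofReal (p * w * v⁻¹ * k w v)) +
    (ENNReal.ofReal q) • Measure.dirac v

/-- The sets `Ω₀ = Ω = (0,1) × V` and, for `i ≥ 1`,
`Ω_i = {(x,v) : v ∈ V, −i v b⁻¹ < x ≤ −(i−1) v b⁻¹}`. -/
def Omi (b : ℝ) (V : Set ℝ) : ℕ → Set (ℝ × ℝ)
  | 0 => (Set.Ioo (0 : ℝ) 1) ×ˢ V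
  | (i + 1) =>
      {z : ℝ × ℝ | z.2 ∈ V ∧ -(((i : ℝ) + 1) * z.2 * b⁻¹) < z.1 ∧
        z.1 ≤ -((i : ℝ) * z.2 * b⁻¹)}

/-- `Γ_j = ⋃_{i=0}^{j} Ω_i`. -/
def Gam (b : ℝ) (V : Set ℝ) (j : ℕ) : Set (ℝ × ℝ) :=
  ⋃ i ∈ Finset.range (j + 1), Omi b V i

/-- A measurable function `f̃ : Ω̃ → ℝ` (modelled on all of `ℝ × ℝ`, with
`Ω̃ = (−∞,1) × V`), μ-integrable on each `Γ_j`, is a boundary extension of `f` if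
`f̃ = f` a.e. on `{x > 0}` and, a.e. on `{x ≤ 0}`, the function
`w ↦ f̃(1 + x w v⁻¹, w)` is `ℓ(·,v)`-integrable with
`f̃(x,v) = ∫_V f̃(1 + x w v⁻¹, w) ℓ(dw,v)`. -/
def IsBoundaryExtension (b p q : ℝ) (k : ℝ → ℝ → ℝ) (ν : Measure ℝ) (V : Set ℝ)
    (f ftil : ℝ × ℝ → ℝ) : Prop :=
  Measurable ftil ∧
  (∀ j : ℕ, IntegrableOn ftil (Gam b V j) ((volume : Measure ℝ).prod ν)) ∧
  (∀ᵐ z ∂(((volume : Measure ℝ).prod ν).restrict ((Set.Iio (1 : ℝ)) ×ˢ V)),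
    0 < z.1 → ftil z = f z) ∧
  (∀ᵐ z ∂(((volume : Measure ℝ).prod ν).restrict ((Set.Iio (1 : ℝ)) ×ˢ V)),
    z.1 ≤ 0 →
      Integrable (fun w => ftil (1 + z.1 * w * z.2⁻¹, w)) (ell p q k ν V z.2) ∧
      ftil z = ∫ w, ftil (1 + z.1 * w * z.2⁻¹, w) ∂(ell p q k ν V z.2))

/-!
Write `Eₜ = {(x,v) : v ∈ V, -tv < x ≤ 0}` (the inflow strip) and
`Rₜ = {(x,v) : v ∈ V, 1 - tv < x ≤ 1}` (the outflow strip). For any measurable `G ≥ 0`,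
integrating `x ↦ ∫ G(1 + x w/v, w) ℓ(dw,v)` over `Eₜ` and substituting `u = 1 + x w/v`
(Jacobian `v/w`, cancelling the density `w/v` of `ℓ`) gives
`∫∫ (p k(w,v) C(w) + q C(v)) ν(dw) ν(dv)` with `C(w) = ∫_{1-tw}^{1} G(u,w) du`;
since `∫_V k(w,·) dν = 1` and `p + q = 1` this is exactly `∫_{Rₜ} G`.

Applied to the negative part `G = (-f̃)⁺`, which the boundary relation bounds by its own
boundary integral, this bounds the inflow mass by the outflow mass. As `v < b`, the outflow
strip at time `(j+1)/b` lies in the region `{-jv/b < x ≤ 1}`, so induction on `j` shows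
`f̃ ≥ 0` a.e. on `(-∞,1] × V`. The boundary integrals of `(-f̃)⁺` then vanish a.e. on `Eₜ`
(their integral over `Eₜ` is `∫_{Rₜ} (-f̃)⁺ = 0`), so the boundary relation holds for
`G = f̃⁺` and inflow equals outflow. Hence the mass in the shifted window `(-tv, 1-tv]` equals
the mass in `(0,1]`: both are the mass in `(-tv, 1]` minus the outflow (= inflow), which is
finite by integrability on some `Γⱼ`.
-/

open scoped ENNReal

theorem ofReal_integral_le_lintegral_ofReal {α : Type*} [MeasurableSpace α] {μ : Measure α}
    (f : α → ℝ) : ENNReal.ofReal (∫ x, f x ∂μ) ≤ ∫⁻ x, ENNReal.ofReal (f x) ∂μ := by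
  by_cases hf : Integrable f μ
  · rw [integral_eq_lintegral_pos_part_sub_lintegral_neg_part hf]
    exact (ENNReal.ofReal_le_ofReal (sub_le_self _ ENNReal.toReal_nonneg)).trans
      ENNReal.ofReal_toReal_le
  · simp [integral_undef hf]

theorem setLIntegral_Ioc_comp_affine {F : ℝ → ℝ≥0∞} (hF : Measurable F) {m : ℝ} (hm : 0 < m)
    (c a b : ℝ) :
    ∫⁻ x in Ioc a b, F (c + x * m) =
      ENNReal.ofReal m⁻¹ * ∫⁻ y in Ioc (c + a * m) (c + b * m), F y := by
  have hpre : (fun x => c + x * m) ⁻¹' Ioc (c + a * m) (c + b * m) = Ioc a b := by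
    ext x; simp [mul_lt_mul_iff_left₀ hm, mul_le_mul_iff_left₀ hm]
  have hmap : Measure.map (fun x => c + x * m) volume = ENNReal.ofReal m⁻¹ • volume := by
    rw [show (fun x => c + x * m) = (c + ·) ∘ (· * m) from rfl,
      ← Measure.map_map (measurable_const_add c) (measurable_mul_const m),
      Real.map_volume_mul_right hm.ne', Measure.map_smul, map_add_left_eq_self,
      abs_of_pos (inv_pos.2 hm)]
  rw [← hpre, ← setLIntegral_map measurableSet_Ioc hF (by fun_prop), hmap,
    Measure.restrict_smul, lintegral_smul_measure, smul_eq_mul]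

theorem setLIntegral_Ioc_comp_const_add {F : ℝ → ℝ≥0∞} (hF : Measurable F) (c a b : ℝ) :
    ∫⁻ x in Ioc a b, F (c + x) = ∫⁻ y in Ioc (c + a) (c + b), F y := by
  simpa using setLIntegral_Ioc_comp_affine hF one_pos c a b

def strip (V : Set ℝ) (α β : ℝ → ℝ) : Set (ℝ × ℝ) :=
  {z | z.2 ∈ V ∧ z.1 ∈ Ioc (α z.2) (β z.2)}

section Strip

variable {V : Set ℝ} {α β γ : ℝ → ℝ}

theorem measurableSet_strip (hV : MeasurableSet V) (hα : Measurable α) (hβ : Measurable β) :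
    MeasurableSet (strip V α β) :=
  (measurable_snd hV).inter
    ((measurableSet_lt (hα.comp measurable_snd) measurable_fst).inter
      (measurableSet_le measurable_fst (hβ.comp measurable_snd)))

theorem strip_subset_strip {α' β' : ℝ → ℝ} (hα : ∀ v ∈ V, α' v ≤ α v)
    (hβ : ∀ v ∈ V, β v ≤ β' v) : strip V α β ⊆ strip V α' β' :=
  fun _ ⟨hz, h₁, h₂⟩ => ⟨hz, (hα _ hz).trans_lt h₁, h₂.trans (hβ _ hz)⟩

theorem strip_union_strip (h₁ : ∀ v ∈ V, α v ≤ β v) (h₂ : ∀ v ∈ V, β v ≤ γ v) :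
    strip V α β ∪ strip V β γ = strip V α γ := by
  ext z
  simp only [strip, mem_union, mem_ofPred_eq, ← and_or_left]
  refine and_congr_right fun hz => ?_
  rw [← mem_union, Ioc_union_Ioc_eq_Ioc (h₁ _ hz) (h₂ _ hz)]

theorem disjoint_strip_strip : Disjoint (strip V α β) (strip V β γ) :=
  disjoint_left.2 fun _ h h' => (h.2.2.trans_lt h'.2.1).false

theorem Measurable.lintegral_Ioc {G : ℝ × ℝ → ℝ≥0∞} (hG : Measurable G) (hα : Measurable α)
    (hβ : Measurable β) : Measurable fun v => ∫⁻ x in Ioc (α v) (β v), G (x, v) := by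
  have hind : ∀ v, ∫⁻ x in Ioc (α v) (β v), G (x, v) =
      ∫⁻ x, (strip univ α β).indicator G (x, v) := fun v => by
    rw [← lintegral_indicator measurableSet_Ioc]
    exact lintegral_congr fun x => by simp [strip, indicator_apply]
  simp_rw [hind]
  exact (hG.indicator (measurableSet_strip MeasurableSet.univ hα hβ)).lintegral_prod_left'

theorem setLIntegral_strip {ν : Measure ℝ} [SFinite ν] {G : ℝ × ℝ → ℝ≥0∞} (hG : Measurable G)
    (hV : MeasurableSet V) (hα : Measurable α) (hβ : Measurable β) :
    ∫⁻ z in strip V α β, G z ∂(volume.prod ν) =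
      ∫⁻ v in V, (∫⁻ x in Ioc (α v) (β v), G (x, v)) ∂ν := by
  rw [← lintegral_indicator (measurableSet_strip hV hα hβ),
    lintegral_prod_symm' _ (hG.indicator (measurableSet_strip hV hα hβ)),
    ← lintegral_indicator hV]
  refine lintegral_congr fun v => ?_
  by_cases hv : v ∈ V
  · simp [strip, hv, ← lintegral_indicator measurableSet_Ioc, indicator]
  · simp [strip, hv]

theorem setLIntegral_strip_add (hV : MeasurableSet V) (hβ : Measurable β) (hγ : Measurable γ)
    {ν : Measure ℝ} (G : ℝ × ℝ → ℝ≥0∞)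
    (h₁ : ∀ v ∈ V, α v ≤ β v) (h₂ : ∀ v ∈ V, β v ≤ γ v) :
    ∫⁻ z in strip V α β, G z ∂(volume.prod ν) + ∫⁻ z in strip V β γ, G z ∂(volume.prod ν) =
      ∫⁻ z in strip V α γ, G z ∂(volume.prod ν) := by
  rw [← lintegral_union (measurableSet_strip hV hβ hγ) disjoint_strip_strip,
    strip_union_strip h₁ h₂]

theorem setLIntegral_Ioo_prod_comp_sub_mul {ν : Measure ℝ} [SFinite ν] (hV : MeasurableSet V)
    {G : ℝ × ℝ → ℝ≥0∞} (hG : Measurable G) (t : ℝ) :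
    ∫⁻ z in Ioo 0 1 ×ˢ V, G (z.1 - t * z.2, z.2) ∂(volume.prod ν) =
      ∫⁻ z in strip V (fun v => -(t * v)) (fun v => 1 - t * v), G z ∂(volume.prod ν) := by
  rw [setLIntegral_strip hG hV (by fun_prop) (by fun_prop), ← Measure.prod_restrict,
    lintegral_prod_symm' _ (by fun_prop)]
  refine lintegral_congr fun v => ?_
  rw [setLIntegral_congr Ioo_ae_eq_Ioc]
  simpa [sub_eq_neg_add] using
    setLIntegral_Ioc_comp_const_add (hG.comp (by fun_prop : Measurable fun x => (x, v)))
      (-(t * v)) 0 1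

end Strip

section Transport

variable {p q : ℝ} {k : ℝ → ℝ → ℝ} {ν : Measure ℝ} {V : Set ℝ}

theorem lintegral_ell (hk : Measurable (Function.uncurry k)) (v : ℝ) {F : ℝ → ℝ≥0∞}
    (hF : Measurable F) :
    ∫⁻ w, F w ∂ell p q k ν V v =
      (∫⁻ w in V, ENNReal.ofReal (p * w * v⁻¹ * k w v) * F w ∂ν) + ENNReal.ofReal q * F v := by
  rw [ell, lintegral_add_measure, lintegral_withDensity_eq_lintegral_mul _ (by fun_prop) hF,
    lintegral_smul_measure, lintegral_dirac]
  rfl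

variable [SFinite ν]

theorem measurable_lintegral_ell (hk : Measurable (Function.uncurry k)) {G : ℝ × ℝ → ℝ≥0∞}
    (hG : Measurable G) :
    Measurable fun z : ℝ × ℝ => ∫⁻ w, G (1 + z.1 * w * z.2⁻¹, w) ∂ell p q k ν V z.2 := by
  have hGz : ∀ z : ℝ × ℝ, Measurable fun w => G (1 + z.1 * w * z.2⁻¹, w) := fun z =>
    hG.comp (by fun_prop)
  simp_rw [lintegral_ell hk _ (hGz _)]
  refine Measurable.add ?_ (Measurable.const_mul (hG.comp (by fun_prop)) _)
  exact Measurable.lintegral_prod_right' (f := fun zw : (ℝ × ℝ) × ℝ =>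
    ENNReal.ofReal (p * zw.2 * zw.1.2⁻¹ * k zw.2 zw.1.2) * G (1 + zw.1.1 * zw.2 * zw.1.2⁻¹, zw.2))
    (by fun_prop)

theorem lintegral_Ioc_lintegral_ell (hk : Measurable (Function.uncurry k)) (hp : 0 ≤ p)
    (hV : V ⊆ Ioi 0) (hVm : MeasurableSet V) {G : ℝ × ℝ → ℝ≥0∞} (hG : Measurable G)
    (t : ℝ) {v : ℝ} (hv : 0 < v) :
    ∫⁻ x in Ioc (-(t * v)) 0, ∫⁻ w, G (1 + x * w * v⁻¹, w) ∂ell p q k ν V v =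
      ENNReal.ofReal p * (∫⁻ w in V, ENNReal.ofReal (k w v) *
          (∫⁻ u in Ioc (1 - t * w) 1, G (u, w)) ∂ν) +
        ENNReal.ofReal q * ∫⁻ u in Ioc (1 - t * v) 1, G (u, v) := by
  have hGw : ∀ w, Measurable fun u => G (u, w) := fun w => hG.comp (by fun_prop)
  have hC : Measurable fun w => ∫⁻ u in Ioc (1 - t * w) 1, G (u, w) :=
    hG.lintegral_Ioc (by fun_prop) measurable_const
  have hrescale : ∀ w ∈ V, ∫⁻ x in Ioc (-(t * v)) 0,
      ENNReal.ofReal (p * w * v⁻¹ * k w v) * G (1 + x * w * v⁻¹, w) =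
        ENNReal.ofReal p * (ENNReal.ofReal (k w v) * ∫⁻ u in Ioc (1 - t * w) 1, G (u, w)) := by
    intro w hw
    have hw0 : 0 < w := hV hw
    have hwv : 0 < w * v⁻¹ := mul_pos hw0 (inv_pos.2 hv)
    simp_rw [mul_assoc _ w v⁻¹]
    rw [lintegral_const_mul _ (show Measurable fun x => G (1 + x * (w * v⁻¹), w) by fun_prop),
      setLIntegral_Ioc_comp_affine (hGw w) hwv, ← mul_assoc,
      ← ENNReal.ofReal_mul' (inv_pos.2 hwv).le,
      show p * (w * v⁻¹) * k w v * (w * v⁻¹)⁻¹ = p * k w v by field_simp,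
      show 1 + -(t * v) * (w * v⁻¹) = 1 - t * w by field_simp; ring,
      zero_mul, add_zero, ENNReal.ofReal_mul hp, mul_assoc]
  calc ∫⁻ x in Ioc (-(t * v)) 0, ∫⁻ w, G (1 + x * w * v⁻¹, w) ∂ell p q k ν V v
      = ∫⁻ x in Ioc (-(t * v)) 0, ((∫⁻ w in V, ENNReal.ofReal (p * w * v⁻¹ * k w v) *
          G (1 + x * w * v⁻¹, w) ∂ν) + ENNReal.ofReal q * G (1 + x, v)) := by
        refine lintegral_congr fun x => ?_
        rw [lintegral_ell hk v (F := fun w => G (1 + x * w * v⁻¹, w)) (by fun_prop),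
          mul_inv_cancel_right₀ hv.ne']
    _ = ∫⁻ w in V, (∫⁻ x in Ioc (-(t * v)) 0, ENNReal.ofReal (p * w * v⁻¹ * k w v) *
          G (1 + x * w * v⁻¹, w)) ∂ν +
        ENNReal.ofReal q * ∫⁻ x in Ioc (-(t * v)) 0, G (1 + x, v) := by
        rw [lintegral_add_left (Measurable.lintegral_prod_right' (f := fun xw : ℝ × ℝ =>
            ENNReal.ofReal (p * xw.2 * v⁻¹ * k xw.2 v) * G (1 + xw.1 * xw.2 * v⁻¹, xw.2))
            (by fun_prop)),
          lintegral_lintegral_swap (by fun_prop), lintegral_const_mul _ (by fun_prop)]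
    _ = _ := by
        rw [setLIntegral_congr_fun hVm hrescale,
          lintegral_const_mul _ (by fun_prop),
          setLIntegral_Ioc_comp_const_add (hGw v), add_zero, ← sub_eq_add_neg]

theorem setLIntegral_strip_lintegral_ell (hk : Measurable (Function.uncurry k))
    (hknn : ∀ w v, 0 ≤ k w v)
    (hk1 : ∀ w ∈ V, ∫ v in V, k w v ∂ν = 1) (hp : 0 ≤ p) (hq : 0 ≤ q) (hpq : p + q = 1)
    (hV : V ⊆ Ioi 0) (hVm : MeasurableSet V) {G : ℝ × ℝ → ℝ≥0∞} (hG : Measurable G) (t : ℝ) :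
    ∫⁻ z in strip V (fun v => -(t * v)) (fun _ => 0),
        (∫⁻ w, G (1 + z.1 * w * z.2⁻¹, w) ∂ell p q k ν V z.2) ∂(volume.prod ν) =
      ∫⁻ z in strip V (fun v => 1 - t * v) (fun _ => 1), G z ∂(volume.prod ν) := by
  have hC : Measurable fun w => ∫⁻ u in Ioc (1 - t * w) 1, G (u, w) :=
    hG.lintegral_Ioc (by fun_prop) measurable_const
  have hkC : Measurable fun wv : ℝ × ℝ =>
      ENNReal.ofReal (k wv.1 wv.2) * ∫⁻ u in Ioc (1 - t * wv.1) 1, G (u, wv.1) :=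
    hk.ennreal_ofReal.fun_mul (hC.comp measurable_fst)
  have hKC : Measurable fun v =>
      ∫⁻ w in V, ENNReal.ofReal (k w v) * (∫⁻ u in Ioc (1 - t * w) 1, G (u, w)) ∂ν :=
    hkC.lintegral_prod_left'
  have hk_one : ∀ w ∈ V, ∫⁻ v in V, ENNReal.ofReal (k w v) ∂ν = 1 := fun w hw => by
    rw [← ofReal_integral_eq_lintegral_ofReal
      (Integrable.of_integral_ne_zero (by rw [hk1 w hw]; exact one_ne_zero))
      (ae_of_all _ (hknn w)), hk1 w hw, ENNReal.ofReal_one]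
  rw [setLIntegral_strip (measurable_lintegral_ell hk hG) hVm (by fun_prop) measurable_const,
    setLIntegral_strip hG hVm (by fun_prop) measurable_const,
    setLIntegral_congr_fun hVm fun v hv => lintegral_Ioc_lintegral_ell hk hp hV hVm hG t (hV hv),
    lintegral_add_left (hKC.const_mul _), lintegral_const_mul _ hKC, lintegral_const_mul _ hC,
    lintegral_lintegral_swap (f := fun v w => ENNReal.ofReal (k w v) *
      ∫⁻ u in Ioc (1 - t * w) 1, G (u, w)) (hkC.comp measurable_swap).aemeasurable,
    setLIntegral_congr_fun hVm fun w hw => by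
      rw [lintegral_mul_const _ (by fun_prop), hk_one w hw, one_mul],
    ← add_mul, ← ENNReal.ofReal_add hp hq, hpq, ENNReal.ofReal_one, one_mul]

end Transport

theorem ae_fst_ne (ν : Measure ℝ) (c : ℝ) : ∀ᵐ z ∂(volume.prod ν), z.1 ≠ c :=
  Measure.quasiMeasurePreserving_fst.ae (p := (· ≠ c)) (by simp [ae_iff])

theorem Gam_succ (b : ℝ) (V : Set ℝ) (j : ℕ) :
    Gam b V (j + 1) = Gam b V j ∪ Omi b V (j + 1) := by
  simp only [Gam, Finset.range_add_one, Finset.set_biUnion_insert, union_comm]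

theorem mem_Gam {b : ℝ} {V : Set ℝ} {z : ℝ × ℝ} (hz : z.2 ∈ V) {j : ℕ}
    (h₁ : -(j * z.2 * b⁻¹) < z.1) (h₂ : z.1 < 1) : z ∈ Gam b V j := by
  induction j with
  | zero => exact mem_biUnion (Finset.mem_range.2 Nat.zero_lt_one) ⟨⟨by simpa using h₁, h₂⟩, hz⟩
  | succ j ih =>
    rw [Gam_succ]
    by_cases h : -(j * z.2 * b⁻¹) < z.1
    · exact Or.inl (ih h)
    · exact Or.inr ⟨hz, by push_cast at h₁; exact h₁, not_lt.1 h⟩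

namespace IsBoundaryExtension

variable {b p q : ℝ} {k : ℝ → ℝ → ℝ} {ν : Measure ℝ} {V : Set ℝ} {f ftil : ℝ × ℝ → ℝ}

theorem ofReal_neg_le (hext : IsBoundaryExtension b p q k ν V f ftil) :
    ∀ᵐ z ∂(volume.prod ν), z ∈ Iio 1 ×ˢ V → z.1 ≤ 0 →
      ENNReal.ofReal (-ftil z) ≤
        ∫⁻ w, ENNReal.ofReal (-ftil (1 + z.1 * w * z.2⁻¹, w)) ∂ell p q k ν V z.2 := by
  filter_upwards [ae_imp_of_ae_restrict hext.2.2.2] with z hz hzΩ hz0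
  rw [(hz hzΩ hz0).2, ← integral_neg]
  exact ofReal_integral_le_lintegral_ofReal _

theorem ofReal_eq_lintegral (hext : IsBoundaryExtension b p q k ν V f ftil) :
    ∀ᵐ z ∂(volume.prod ν), z ∈ Iio 1 ×ˢ V → z.1 ≤ 0 →
      (∀ᵐ w ∂ell p q k ν V z.2, 0 ≤ ftil (1 + z.1 * w * z.2⁻¹, w)) →
      ENNReal.ofReal (ftil z) =
        ∫⁻ w, ENNReal.ofReal (ftil (1 + z.1 * w * z.2⁻¹, w)) ∂ell p q k ν V z.2 := by
  filter_upwards [ae_imp_of_ae_restrict hext.2.2.2] with z hz hzΩ hz0 hnn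
  obtain ⟨hint, heq⟩ := hz hzΩ hz0
  rw [heq, ofReal_integral_eq_lintegral_ofReal hint hnn]

theorem setLIntegral_outflow_ne_top (hext : IsBoundaryExtension b p q k ν V f ftil)
    (hV : V ⊆ Ioo 0 b) (t : ℝ) :
    ∫⁻ z in strip V (fun v => 1 - t * v) (fun _ => 1), ENNReal.ofReal (ftil z)
      ∂(volume.prod ν) ≠ ∞ := by
  refine ne_top_of_le_ne_top (hext.2.1 ⌈t * b⌉₊).lintegral_lt_top.ne (lintegral_mono_set' ?_)
  filter_upwards [ae_fst_ne ν 1] with z h1 hz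
  obtain ⟨hzV, hz1, hz2⟩ := hz
  obtain ⟨hv0, hvb⟩ := hV hzV
  have hb : 0 < b := hv0.trans hvb
  have : t * z.2 ≤ ⌈t * b⌉₊ * z.2 * b⁻¹ := by
    rw [le_mul_inv_iff₀ hb]
    nlinarith [Nat.le_ceil (t * b)]
  exact mem_Gam hzV (by simp only at hz1; linarith) (lt_of_le_of_ne hz2 h1)

variable [SFinite ν]

theorem setLIntegral_neg_inflow_le_outflow (hext : IsBoundaryExtension b p q k ν V f ftil)
    (hk : Measurable (Function.uncurry k)) (hknn : ∀ w v, 0 ≤ k w v)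
    (hk1 : ∀ w ∈ V, ∫ v in V, k w v ∂ν = 1) (hp : 0 ≤ p) (hq : 0 ≤ q) (hpq : p + q = 1)
    (hV : V ⊆ Ioi 0) (hVm : MeasurableSet V) (t : ℝ) :
    ∫⁻ z in strip V (fun v => -(t * v)) (fun _ => 0), ENNReal.ofReal (-ftil z)
        ∂(volume.prod ν) ≤
      ∫⁻ z in strip V (fun v => 1 - t * v) (fun _ => 1), ENNReal.ofReal (-ftil z)
        ∂(volume.prod ν) := by
  have hneg : Measurable fun z => ENNReal.ofReal (-ftil z) := hext.1.neg.ennreal_ofReal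
  rw [← setLIntegral_strip_lintegral_ell hk hknn hk1 hp hq hpq hV hVm hneg]
  refine setLIntegral_mono_ae (measurable_lintegral_ell hk hneg).aemeasurable ?_
  filter_upwards [hext.ofReal_neg_le] with z hz hzE
  exact hz ⟨hzE.2.2.trans_lt one_pos, hzE.1⟩ hzE.2.2

theorem ae_nonneg (hext : IsBoundaryExtension b p q k ν V f ftil)
    (hk : Measurable (Function.uncurry k)) (hknn : ∀ w v, 0 ≤ k w v)
    (hk1 : ∀ w ∈ V, ∫ v in V, k w v ∂ν = 1) (hp : 0 ≤ p) (hq : 0 ≤ q) (hpq : p + q = 1)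
    (hV : V ⊆ Ioo 0 b) (hVm : MeasurableSet V)
    (hf : ∀ᵐ z ∂((volume.prod ν).restrict (Ioo 0 1 ×ˢ V)), 0 ≤ f z) :
    ∀ᵐ z ∂(volume.prod ν), z.2 ∈ V → z.1 ≤ 1 → 0 ≤ ftil z := by
  set G : ℝ × ℝ → ℝ≥0∞ := fun z => ENNReal.ofReal (-ftil z)
  have hG : Measurable G := hext.1.neg.ennreal_ofReal
  have hG0 : ∀ {z}, G z = 0 ↔ 0 ≤ ftil z := by simp [G]
  set S : ℕ → Set (ℝ × ℝ) := fun j => strip V (fun v => -(j / b * v)) (fun _ => 1)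
  have hS : ∀ j, MeasurableSet (S j) := fun j =>
    measurableSet_strip hVm (by fun_prop) measurable_const
  have base : ∫⁻ z in strip V (fun _ => 0) (fun _ => 1), G z ∂(volume.prod ν) = 0 := by
    rw [setLIntegral_eq_zero_iff (measurableSet_strip hVm measurable_const measurable_const) hG]
    filter_upwards [ae_imp_of_ae_restrict hf, ae_imp_of_ae_restrict hext.2.2.1, ae_fst_ne ν 1]
      with z hfz hfeq hz1 hz
    obtain ⟨hzV, hz0, hz1'⟩ := hz
    have hzΩ : z.1 < 1 := lt_of_le_of_ne hz1' hz1
    rw [hG0, hfeq ⟨hzΩ, hzV⟩ hz0]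
    exact hfz ⟨⟨hz0, hzΩ⟩, hzV⟩
  have step : ∀ j : ℕ, ∫⁻ z in S j, G z ∂(volume.prod ν) = 0 →
      ∫⁻ z in S (j + 1), G z ∂(volume.prod ν) = 0 := by
    intro j hj
    set t : ℝ := ((j + 1 : ℕ) : ℝ) / b
    have hstep : ∀ v ∈ V, j / b * v + v / b = t * v := fun v _ => by
      simp only [t]; push_cast; ring
    have hvb : ∀ v ∈ V, v / b < 1 := fun v hv =>
      (div_lt_one ((hV hv).1.trans (hV hv).2)).2 (hV hv).2
    have htv : ∀ v ∈ V, 0 ≤ t * v := fun v hv =>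
      mul_nonneg (div_nonneg (Nat.cast_nonneg _) ((hV hv).1.trans (hV hv).2).le) (hV hv).1.le
    refine le_antisymm ?_ bot_le
    calc ∫⁻ z in S (j + 1), G z ∂(volume.prod ν)
        = ∫⁻ z in strip V (fun v => -(t * v)) (fun _ => 0), G z ∂(volume.prod ν) +
            ∫⁻ z in strip V (fun _ => 0) (fun _ => 1), G z ∂(volume.prod ν) :=
          (setLIntegral_strip_add hVm measurable_const measurable_const G
            (fun v hv => neg_nonpos.2 (htv v hv)) (fun _ _ => zero_le_one)).symm
      _ = ∫⁻ z in strip V (fun v => -(t * v)) (fun _ => 0), G z ∂(volume.prod ν) := by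
          rw [base, add_zero]
      _ ≤ ∫⁻ z in strip V (fun v => 1 - t * v) (fun _ => 1), G z ∂(volume.prod ν) :=
          hext.setLIntegral_neg_inflow_le_outflow hk hknn hk1 hp hq hpq
            (fun v hv => (hV hv).1) hVm t
      _ ≤ ∫⁻ z in S j, G z ∂(volume.prod ν) :=
          lintegral_mono_set (strip_subset_strip
            (fun v hv => by linarith [hstep v hv, hvb v hv]) fun _ _ => le_rfl)
      _ = 0 := hj
  have hSzero : ∀ j, ∀ᵐ z ∂(volume.prod ν), z ∈ S j → G z = 0 := fun j =>
    (setLIntegral_eq_zero_iff (hS j) hG).1 <| by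
      induction j with
      | zero => simpa [S] using base
      | succ j ih => exact step j ih
  filter_upwards [ae_all_iff.2 hSzero] with z hz hzV hz1
  obtain ⟨j, hj⟩ := exists_nat_gt (-z.1 * b / z.2)
  obtain ⟨hv0, hvb⟩ := hV hzV
  refine hG0.1 (hz j ⟨hzV, ?_, hz1⟩)
  rw [div_lt_iff₀ hv0] at hj
  simp only
  rw [neg_lt, div_mul_eq_mul_div, lt_div_iff₀ (hv0.trans hvb)]
  linarith

theorem setLIntegral_inflow_eq_outflow (hext : IsBoundaryExtension b p q k ν V f ftil)
    (hk : Measurable (Function.uncurry k)) (hknn : ∀ w v, 0 ≤ k w v)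
    (hk1 : ∀ w ∈ V, ∫ v in V, k w v ∂ν = 1) (hp : 0 ≤ p) (hq : 0 ≤ q) (hpq : p + q = 1)
    (hV : V ⊆ Ioo 0 b) (hVm : MeasurableSet V)
    (hf : ∀ᵐ z ∂((volume.prod ν).restrict (Ioo 0 1 ×ˢ V)), 0 ≤ f z) (t : ℝ) :
    ∫⁻ z in strip V (fun v => -(t * v)) (fun _ => 0), ENNReal.ofReal (ftil z) ∂(volume.prod ν) =
      ∫⁻ z in strip V (fun v => 1 - t * v) (fun _ => 1), ENNReal.ofReal (ftil z)
        ∂(volume.prod ν) := by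
  have hV0 : V ⊆ Ioi 0 := fun v hv => (hV hv).1
  have hE : MeasurableSet (strip V (fun v => -(t * v)) (fun _ => 0)) :=
    measurableSet_strip hVm (by fun_prop) measurable_const
  have hneg : Measurable fun z => ENNReal.ofReal (-ftil z) := hext.1.neg.ennreal_ofReal
  have hnn := hext.ae_nonneg hk hknn hk1 hp hq hpq hV hVm hf
  have hbdry : ∀ᵐ z ∂(volume.prod ν), z ∈ strip V (fun v => -(t * v)) (fun _ => 0) →
      ∫⁻ w, ENNReal.ofReal (-ftil (1 + z.1 * w * z.2⁻¹, w)) ∂ell p q k ν V z.2 = 0 := by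
    rw [← setLIntegral_eq_zero_iff hE (measurable_lintegral_ell hk hneg),
      setLIntegral_strip_lintegral_ell hk hknn hk1 hp hq hpq hV0 hVm hneg,
      setLIntegral_eq_zero_iff (measurableSet_strip hVm (by fun_prop) measurable_const) hneg]
    filter_upwards [hnn] with z hz hzR
    exact ENNReal.ofReal_eq_zero.2 (neg_nonpos.2 (hz hzR.1 hzR.2.2))
  rw [setLIntegral_congr_fun_ae hE (g := fun z =>
      ∫⁻ w, ENNReal.ofReal (ftil (1 + z.1 * w * z.2⁻¹, w)) ∂ell p q k ν V z.2),
    setLIntegral_strip_lintegral_ell hk hknn hk1 hp hq hpq hV0 hVm hext.1.ennreal_ofReal]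
  filter_upwards [hbdry, hext.ofReal_eq_lintegral] with z hz heq hzE
  refine heq ⟨hzE.2.2.trans_lt one_pos, hzE.1⟩ hzE.2.2 ?_
  filter_upwards [(lintegral_eq_zero_iff (hneg.comp (by fun_prop))).1 (hz hzE)] with w hw
  exact neg_nonpos.1 (ENNReal.ofReal_eq_zero.1 hw)

theorem setLIntegral_comp_sub_mul (hext : IsBoundaryExtension b p q k ν V f ftil)
    (hk : Measurable (Function.uncurry k)) (hknn : ∀ w v, 0 ≤ k w v)
    (hk1 : ∀ w ∈ V, ∫ v in V, k w v ∂ν = 1) (hp : 0 ≤ p) (hq : 0 ≤ q) (hpq : p + q = 1)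
    (hV : V ⊆ Ioo 0 b) (hVm : MeasurableSet V)
    (hf : ∀ᵐ z ∂((volume.prod ν).restrict (Ioo 0 1 ×ˢ V)), 0 ≤ f z) {t : ℝ} (ht : 0 ≤ t) :
    ∫⁻ z in Ioo 0 1 ×ˢ V, ENNReal.ofReal (ftil (z.1 - t * z.2, z.2)) ∂(volume.prod ν) =
      ∫⁻ z in Ioo 0 1 ×ˢ V, ENNReal.ofReal (ftil z) ∂(volume.prod ν) := by
  set g : ℝ × ℝ → ℝ≥0∞ := fun z => ENNReal.ofReal (ftil z)
  have hg : Measurable g := hext.1.ennreal_ofReal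
  have htv : ∀ v ∈ V, 0 ≤ t * v := fun v hv => mul_nonneg ht (hV hv).1.le
  have h0 := setLIntegral_Ioo_prod_comp_sub_mul (ν := ν) hVm hg 0
  simp only [zero_mul, sub_zero, neg_zero, Prod.mk.eta] at h0
  rw [setLIntegral_Ioo_prod_comp_sub_mul hVm hg t, h0]
  have hsplit := (setLIntegral_strip_add (α := fun v => -(t * v)) (β := fun v => 1 - t * v)
    (γ := fun _ => 1) (ν := ν) hVm (by fun_prop) measurable_const g
    (fun v hv => by linarith) (fun v hv => by linarith [htv v hv])).trans
    (setLIntegral_strip_add (α := fun v => -(t * v)) (β := fun _ => 0) (γ := fun _ => 1)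
      hVm measurable_const measurable_const g
      (fun v hv => by linarith [htv v hv]) (fun _ _ => zero_le_one)).symm
  rw [hext.setLIntegral_inflow_eq_outflow hk hknn hk1 hp hq hpq hV hVm hf t] at hsplit
  exact (ENNReal.add_left_inj (hext.setLIntegral_outflow_ne_top hV t)).1
    (hsplit.trans (add_comm _ _))

theorem ae_nonneg_comp_sub_mul (hext : IsBoundaryExtension b p q k ν V f ftil)
    (hk : Measurable (Function.uncurry k)) (hknn : ∀ w v, 0 ≤ k w v)
    (hk1 : ∀ w ∈ V, ∫ v in V, k w v ∂ν = 1) (hp : 0 ≤ p) (hq : 0 ≤ q) (hpq : p + q = 1)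
    (hV : V ⊆ Ioo 0 b) (hVm : MeasurableSet V)
    (hf : ∀ᵐ z ∂((volume.prod ν).restrict (Ioo 0 1 ×ˢ V)), 0 ≤ f z) {t : ℝ} (ht : 0 ≤ t) :
    ∀ᵐ z ∂((volume.prod ν).restrict (Ioo 0 1 ×ˢ V)), 0 ≤ ftil (z.1 - t * z.2, z.2) := by
  have hneg : Measurable fun z => ENNReal.ofReal (-ftil z) := hext.1.neg.ennreal_ofReal
  have h : ∫⁻ z in Ioo 0 1 ×ˢ V, ENNReal.ofReal (-ftil (z.1 - t * z.2, z.2))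
      ∂(volume.prod ν) = 0 := by
    rw [setLIntegral_Ioo_prod_comp_sub_mul hVm hneg t,
      setLIntegral_eq_zero_iff (measurableSet_strip hVm (by fun_prop) (by fun_prop)) hneg]
    filter_upwards [hext.ae_nonneg hk hknn hk1 hp hq hpq hV hVm hf] with z hz hzS
    have := mul_nonneg ht (hV hzS.1).1.le
    exact ENNReal.ofReal_eq_zero.2 (neg_nonpos.2 (hz hzS.1 (by linarith [hzS.2.2])))
  filter_upwards [(lintegral_eq_zero_iff (hneg.comp (by fun_prop))).1 h] with z hz
  exact neg_nonpos.1 (ENNReal.ofReal_eq_zero.1 hz)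

end IsBoundaryExtension

theorem stmt10_general
    (a b p q : ℝ) (ha : 0 ≤ a)
    (hp : 0 ≤ p) (hq : 0 ≤ q)
    (V : Set ℝ) (hV : V ⊆ Set.Ioo a b) (hVm : MeasurableSet V)
    (ν : Measure ℝ) [SigmaFinite ν]
    (k : ℝ → ℝ → ℝ) (hkm : Measurable (Function.uncurry k))
    (hknn : ∀ w v : ℝ, 0 ≤ k w v)
    (hk1 : ∀ w ∈ V, ∫ v in V, k w v ∂ν = 1)
    (f ftil : ℝ × ℝ → ℝ)
    (hext : IsBoundaryExtension b p q k ν V f ftil)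
    (hpq1 : p + q = 1)
    (hfnn : ∀ᵐ z ∂(((volume : Measure ℝ).prod ν).restrict ((Set.Ioo (0 : ℝ) 1) ×ˢ V)),
      0 ≤ f z)
    (t : ℝ) (ht : 0 ≤ t) :
    (∀ᵐ z ∂(((volume : Measure ℝ).prod ν).restrict ((Set.Ioo (0 : ℝ) 1) ×ˢ V)),
      0 ≤ ftil (z.1 - t * z.2, z.2)) ∧
    ∫ z in (Set.Ioo (0 : ℝ) 1) ×ˢ V, ftil (z.1 - t * z.2, z.2)
        ∂((volume : Measure ℝ).prod ν)
      = ∫ z in (Set.Ioo (0 : ℝ) 1) ×ˢ V, f z ∂((volume : Measure ℝ).prod ν) := by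
  have hV' : V ⊆ Ioo 0 b := fun v hv => ⟨ha.trans_lt (hV hv).1, (hV hv).2⟩
  have hnn : ∀ {s : ℝ}, 0 ≤ s → ∀ᵐ z ∂((volume.prod ν).restrict (Ioo 0 1 ×ˢ V)),
      0 ≤ ftil (z.1 - s * z.2, z.2) :=
    hext.ae_nonneg_comp_sub_mul hkm hknn hk1 hp hq hpq1 hV' hVm hfnn
  have hmeas : ∀ s : ℝ, AEStronglyMeasurable (fun z : ℝ × ℝ => ftil (z.1 - s * z.2, z.2))
      ((volume.prod ν).restrict (Ioo 0 1 ×ˢ V)) := fun s =>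
    (hext.1.comp (by fun_prop)).aestronglyMeasurable
  have hf_eq : ∫ z in Ioo 0 1 ×ˢ V, f z ∂(volume.prod ν) =
      ∫ z in Ioo 0 1 ×ˢ V, ftil (z.1 - 0 * z.2, z.2) ∂(volume.prod ν) := by
    refine integral_congr_ae ?_
    filter_upwards [ae_restrict_mem (measurableSet_Ioo.prod hVm),
      ae_restrict_of_ae_restrict_of_subset (prod_mono Ioo_subset_Iio_self subset_rfl)
        hext.2.2.1] with z hz hfeq
    simpa using (hfeq hz.1.1).symm
  refine ⟨hnn ht, ?_⟩
  rw [hf_eq, integral_eq_lintegral_of_nonneg_ae (hnn ht) (hmeas t),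
    integral_eq_lintegral_of_nonneg_ae (hnn le_rfl) (hmeas 0),
    hext.setLIntegral_comp_sub_mul hkm hknn hk1 hp hq hpq1 hV' hVm hfnn ht,
    hext.setLIntegral_comp_sub_mul hkm hknn hk1 hp hq hpq1 hV' hVm hfnn le_rfl]

theorem stmt10
    (a b p q : ℝ) (ha : 0 ≤ a) (hab : a < b)
    (hp : 0 ≤ p) (hq : 0 ≤ q) (hpq : 0 < p + q)
    (V : Set ℝ) (hV : V ⊆ Set.Ioo a b) (hVm : MeasurableSet V)
    (ν : Measure ℝ) [SigmaFinite ν]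
    (k : ℝ → ℝ → ℝ) (hkm : Measurable (Function.uncurry k))
    (hknn : ∀ w v : ℝ, 0 ≤ k w v)
    (hk1 : ∀ w ∈ V, ∫ v in V, k w v ∂ν = 1)
    (f ftil : ℝ × ℝ → ℝ)
    (hf : IntegrableOn f ((Set.Ioo (0 : ℝ) 1) ×ˢ V) ((volume : Measure ℝ).prod ν))
    (hext : IsBoundaryExtension b p q k ν V f ftil)
    (hpq1 : p + q = 1)
    (hfnn : ∀ᵐ z ∂(((volume : Measure ℝ).prod ν).restrict ((Set.Ioo (0 : ℝ) 1) ×ˢ V)),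
      0 ≤ f z)
    (t : ℝ) (ht : 0 ≤ t) :
    (∀ᵐ z ∂(((volume : Measure ℝ).prod ν).restrict ((Set.Ioo (0 : ℝ) 1) ×ˢ V)),
      0 ≤ ftil (z.1 - t * z.2, z.2)) ∧
    ∫ z in (Set.Ioo (0 : ℝ) 1) ×ˢ V, ftil (z.1 - t * z.2, z.2)
        ∂((volume : Measure ℝ).prod ν)
      = ∫ z in (Set.Ioo (0 : ℝ) 1) ×ˢ V, f z ∂((volume : Measure ℝ).prod ν) :=
  stmt10_general a b p q ha hp hq V hV hVm ν k hkm hknn hk1 f ftil hext hpq1 hfnn t ht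
end

section
/- Assume V = (a,b) with ν the Lebesgue measure, a > 0, and p + q < 1. Then for every t ≥ a⁻¹ and every f ∈ L¹(Ω,μ) with boundary extension f̃, ∫_Ω |f̃(x − tv, v)| μ(d(x,v)) ≤ (p+q)^{⌊ta⌋} · ‖f‖_{L¹(Ω)}, where ⌊ta⌋ is the largest integer less than or equal to ta. -/
open MeasureTheory Set Filter Topology

open scoped ENNReal

/-!
Points of `(-∞, 1) × (a, b)` are written `(-σ u, u)`. For `σ ≥ 0` the boundary condition expresses
`f̃` at `σ` through its values at `σ - 1/w`, so the density `u ‖f̃(-σ u, u)‖` is dominated by a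
positive operator. Dually, a weight `ψ(σ, u)` supported in `σ ≥ 0` may be replaced by
`T ψ (σ, u) = p ∫ k(u, w) ψ(σ + 1/u, w) dw + q ψ(σ + 1/u, u)` without decreasing the weighted
mass `∫ ψ(σ, u) u ‖f̃(-σ u, u)‖`, and the left-hand side is the weighted mass of the indicator of
`(t - σ) u ∈ (0, 1)`. Moving this weight by `T` and freezing whatever reaches `σ < 0` stops after
`⌈t b⌉` rounds, since each round lowers `σ` by more than `1/b`; the frozen weight sits on
`-σ u ∈ (0, 1]`, that is, on `Ω` again. It is at most `(p + q)^⌊t a⌋` because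
`Φ(σ) = (p + q)^⌊(t - σ) a⌋` on `0 ≤ σ < t` is a supersolution: one application of `T` costs a
factor `p + q` (as `∫ k = 1`) and lowers `σ` by less than `1/a`.
-/

namespace BoundaryDecay

theorem lintegral_comp_mul_left (g : ℝ → ℝ≥0∞) {c : ℝ} (hc : c ≠ 0) :
    ∫⁻ x, g (c * x) = ENNReal.ofReal |c⁻¹| * ∫⁻ x, g x := by
  rw [← smul_eq_mul, ← lintegral_smul_measure, ← Real.map_volume_mul_left hc]
  exact (lintegral_map_equiv g (Homeomorph.mulLeft₀ c hc).toMeasurableEquiv).symm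

theorem lintegral_prod_comp_add_fst {β : Type*} [MeasurableSpace β] {ν : Measure β} [SFinite ν]
    {g : ℝ × β → ℝ≥0∞} (hg : Measurable g) {h : β → ℝ} (hh : Measurable h) :
    ∫⁻ z, g (z.1 + h z.2, z.2) ∂(volume.prod ν) = ∫⁻ z, g z ∂(volume.prod ν) := by
  rw [lintegral_prod_symm _ (by fun_prop), lintegral_prod_symm _ hg.aemeasurable]
  exact lintegral_congr fun u => lintegral_add_right_eq_self (fun σ => g (σ, u)) (h u)

variable {V : Set ℝ}

theorem lintegral_prod_comp_mul_snd (hVm : MeasurableSet V) (hV : V ⊆ Ioi 0) (c : ℝ)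
    {g : ℝ × ℝ → ℝ≥0∞} (hg : Measurable g) :
    ∫⁻ z, ENNReal.ofReal z.2 * g ((c - z.1) * z.2, z.2) ∂(volume.prod (volume.restrict V))
      = ∫⁻ z, g z ∂(volume.prod (volume.restrict V)) := by
  rw [lintegral_prod_symm _ (by fun_prop), lintegral_prod_symm _ hg.aemeasurable]
  refine lintegral_congr_ae ((ae_restrict_mem hVm).mono fun u hu => ?_)
  have hu0 : 0 < u := hV hu
  calc ∫⁻ σ, ENNReal.ofReal u * g ((c - σ) * u, u)
      = ENNReal.ofReal u * ∫⁻ σ, g (u * σ, u) := by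
        rw [lintegral_const_mul' _ _ ENNReal.ofReal_ne_top]
        congr 1
        simpa only [mul_comm] using lintegral_sub_left_eq_self (fun σ => g (σ * u, u)) c
    _ = ∫⁻ x, g (x, u) := by
        rw [lintegral_comp_mul_left (fun x => g (x, u)) hu0.ne', ← mul_assoc,
          ← ENNReal.ofReal_mul hu0.le, abs_of_pos (inv_pos.2 hu0), mul_inv_cancel₀ hu0.ne',
          ENNReal.ofReal_one, one_mul]

theorem prod_restrict_snd {α β : Type*} [MeasurableSpace α] [MeasurableSpace β]
    (μ : Measure α) (ν : Measure β) [SFinite μ] [SFinite ν] (W : Set β) :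
    μ.prod (ν.restrict W) = (μ.prod ν).restrict (univ ×ˢ W) := by
  rw [← Measure.prod_restrict, Measure.restrict_univ]

theorem ae_snd_mem {α β : Type*} [MeasurableSpace α] [MeasurableSpace β] {μ : Measure α}
    {ν : Measure β} [SFinite μ] [SFinite ν] {W : Set β} (hW : MeasurableSet W) :
    ∀ᵐ z ∂(μ.prod (ν.restrict W)), z.2 ∈ W := by
  rw [prod_restrict_snd]
  exact (ae_restrict_mem (MeasurableSet.univ.prod hW)).mono fun z hz => hz.2

theorem ae_comp_mul_snd (hVm : MeasurableSet V) (hV : V ⊆ Ioi 0) (c : ℝ) {s : Set ℝ}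
    (hs : MeasurableSet s) {P : ℝ × ℝ → Prop}
    (h : ∀ᵐ z ∂(((volume : Measure ℝ).prod volume).restrict (s ×ˢ V)), P z) :
    ∀ᵐ z ∂((volume : Measure ℝ).prod (volume.restrict V)),
      (c - z.1) * z.2 ∈ s → P ((c - z.1) * z.2, z.2) := by
  have h' : ∀ᵐ z ∂((volume : Measure ℝ).prod (volume.restrict V)), z.1 ∈ s → P z := by
    rw [← univ_inter V, ← inter_univ s, ← prod_inter_prod, ← Measure.restrict_restrict
      (hs.prod MeasurableSet.univ), ← prod_restrict_snd] at h
    exact ((ae_restrict_iff' (hs.prod MeasurableSet.univ)).1 h).mono fun z hz h1 => hz ⟨h1, trivial⟩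
  obtain ⟨N, hbad, hNm, hN0⟩ := exists_measurable_superset_of_null (ae_iff.1 h')
  have hnull : ∀ᵐ z ∂((volume : Measure ℝ).prod (volume.restrict V)),
      ENNReal.ofReal z.2 * N.indicator 1 ((c - z.1) * z.2, z.2) = 0 := by
    have hm : Measurable (N.indicator (1 : ℝ × ℝ → ℝ≥0∞)) := measurable_one.indicator hNm
    refine (lintegral_eq_zero_iff (by fun_prop)).1 ?_
    rw [lintegral_prod_comp_mul_snd hVm hV c hm, lintegral_indicator_one hNm, hN0]
  filter_upwards [hnull, ae_snd_mem hVm] with z hz hzV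
  have hpos : ENNReal.ofReal z.2 ≠ 0 := ENNReal.ofReal_ne_zero_iff.2 (hV hzV)
  have hnotN : ((c - z.1) * z.2, z.2) ∉ N := fun hmem => by
    simp [indicator_of_mem hmem, hpos] at hz
  by_contra hcon
  exact hnotN (hbad hcon)

theorem lintegral_prod_lintegral_comm {α β : Type*} [MeasurableSpace α] [MeasurableSpace β]
    {μ : Measure α} {ν : Measure β} [SFinite μ] [SFinite ν] {G : α × β × β → ℝ≥0∞}
    (hG : Measurable G) :
    ∫⁻ z, ∫⁻ w, G (z.1, z.2, w) ∂ν ∂(μ.prod ν) = ∫⁻ z, ∫⁻ u, G (z.1, u, z.2) ∂ν ∂(μ.prod ν) := by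
  rw [lintegral_prod _ (by fun_prop), lintegral_prod _ (by fun_prop)]
  exact lintegral_congr fun σ => lintegral_lintegral_swap (by fun_prop)

variable {a b p q t : ℝ} {k : ℝ → ℝ → ℝ} {F : ℝ × ℝ → ℝ} {ψ ψ₁ ψ₂ Φ : ℝ × ℝ → ℝ≥0∞}

local notation "ρ" => Measure.prod (volume : Measure ℝ) (Measure.restrict volume (Ioo a b))

noncomputable def transfer (a b p q : ℝ) (k : ℝ → ℝ → ℝ) (ψ : ℝ × ℝ → ℝ≥0∞) (z : ℝ × ℝ) :
    ℝ≥0∞ :=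
  ENNReal.ofReal p * (∫⁻ w in Ioo a b, ENNReal.ofReal (k z.2 w) * ψ (z.1 + z.2⁻¹, w))
    + ENNReal.ofReal q * ψ (z.1 + z.2⁻¹, z.2)

theorem measurable_transfer (hk : Measurable (Function.uncurry k)) (hψ : Measurable ψ) :
    Measurable (transfer a b p q k ψ) := by
  unfold transfer
  fun_prop

theorem transfer_mono {z : ℝ × ℝ} (hz : z.2 ∈ Ioo a b)
    (h : ∀ w ∈ Ioo a b, ψ₁ (z.1 + z.2⁻¹, w) ≤ ψ₂ (z.1 + z.2⁻¹, w)) :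
    transfer a b p q k ψ₁ z ≤ transfer a b p q k ψ₂ z := by
  unfold transfer
  gcongr ENNReal.ofReal p * ?_ + ENNReal.ofReal q * ?_
  · exact setLIntegral_mono' measurableSet_Ioo fun w hw => by gcongr; exact h w hw
  · exact h _ hz

theorem transfer_eq_zero {z : ℝ × ℝ} (hz : z.2 ∈ Ioo a b)
    (h : ∀ w ∈ Ioo a b, ψ (z.1 + z.2⁻¹, w) = 0) : transfer a b p q k ψ z = 0 :=
  le_antisymm ((transfer_mono (ψ₂ := 0) hz fun w hw => (h w hw).le).trans (by simp [transfer]))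
    zero_le

theorem transfer_add_le (z : ℝ × ℝ) :
    transfer a b p q k ψ₁ z + transfer a b p q k ψ₂ z ≤ transfer a b p q k (ψ₁ + ψ₂) z := by
  unfold transfer
  calc _ = ENNReal.ofReal p * ((∫⁻ w in Ioo a b, ENNReal.ofReal (k z.2 w) * ψ₁ (z.1 + z.2⁻¹, w))
          + ∫⁻ w in Ioo a b, ENNReal.ofReal (k z.2 w) * ψ₂ (z.1 + z.2⁻¹, w))
        + ENNReal.ofReal q * (ψ₁ + ψ₂) (z.1 + z.2⁻¹, z.2) := by
        simp only [Pi.add_apply]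
        ring
    _ ≤ _ := by
        gcongr
        refine (le_lintegral_add _ _).trans_eq ?_
        simp only [Pi.add_apply, mul_add]

theorem setLIntegral_kernel_eq_one (hknn : ∀ w v, 0 ≤ k w v)
    (hk1 : ∀ w ∈ Ioo a b, ∫ v in Ioo a b, k w v = 1) {u : ℝ} (hu : u ∈ Ioo a b) :
    ∫⁻ w in Ioo a b, ENNReal.ofReal (k u w) = 1 := by
  have hint : Integrable (k u) (volume.restrict (Ioo a b)) :=
    Integrable.of_integral_ne_zero (by rw [hk1 u hu]; exact one_ne_zero)
  rw [← ofReal_integral_eq_lintegral_ofReal hint (ae_of_all _ (hknn u)), hk1 u hu,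
    ENNReal.ofReal_one]

theorem transfer_le_mul (hp : 0 ≤ p) (hq : 0 ≤ q) (hk : Measurable (Function.uncurry k))
    (hknn : ∀ w v, 0 ≤ k w v) (hk1 : ∀ w ∈ Ioo a b, ∫ v in Ioo a b, k w v = 1)
    {z : ℝ × ℝ} (hz : z.2 ∈ Ioo a b) {c : ℝ≥0∞}
    (h : ∀ w ∈ Ioo a b, ψ (z.1 + z.2⁻¹, w) ≤ c) :
    transfer a b p q k ψ z ≤ ENNReal.ofReal (p + q) * c := by
  refine (transfer_mono (ψ₂ := fun _ => c) hz h).trans_eq ?_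
  rw [transfer, lintegral_mul_const _ (by fun_prop), setLIntegral_kernel_eq_one hknn hk1 hz,
    one_mul, ENNReal.ofReal_add hp hq, add_mul]

noncomputable def timeDensity (F : ℝ × ℝ → ℝ) (z : ℝ × ℝ) : ℝ≥0∞ :=
  ENNReal.ofReal z.2 * ‖F (-(z.1 * z.2), z.2)‖ₑ

noncomputable def weightedMass (a b : ℝ) (F : ℝ × ℝ → ℝ) (ψ : ℝ × ℝ → ℝ≥0∞) : ℝ≥0∞ :=
  ∫⁻ z, ψ z * timeDensity F z ∂((volume : Measure ℝ).prod (volume.restrict (Ioo a b)))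

theorem measurable_timeDensity (hF : Measurable F) : Measurable (timeDensity F) := by
  unfold timeDensity
  fun_prop

theorem weightedMass_add_le (h : ∀ z, z.2 ∈ Ioo a b → ψ₁ z + ψ₂ z ≤ ψ z) :
    weightedMass a b F ψ₁ + weightedMass a b F ψ₂ ≤ weightedMass a b F ψ := by
  refine (le_lintegral_add _ _).trans (lintegral_mono_ae ?_)
  filter_upwards [ae_snd_mem measurableSet_Ioo] with z hz
  rw [← add_mul]
  gcongr
  exact h z hz

theorem weightedMass_mono (h : ∀ z, z.2 ∈ Ioo a b → ψ₁ z ≤ ψ₂ z) :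
    weightedMass a b F ψ₁ ≤ weightedMass a b F ψ₂ := by
  simpa [weightedMass] using weightedMass_add_le (ψ₂ := 0) (F := F) (by simpa using h)

theorem weightedMass_eq_zero (h : ∀ z, z.2 ∈ Ioo a b → ψ z = 0) : weightedMass a b F ψ = 0 :=
  le_antisymm ((weightedMass_mono (ψ₂ := 0) fun z hz => (h z hz).le).trans (by simp [weightedMass]))
    zero_le

theorem weightedMass_add (hF : Measurable F) (hψ₁ : Measurable ψ₁) :
    weightedMass a b F (ψ₁ + ψ₂) = weightedMass a b F ψ₁ + weightedMass a b F ψ₂ := by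
  simp only [weightedMass, Pi.add_apply, add_mul]
  exact lintegral_add_left (hψ₁.mul (measurable_timeDensity hF)) _

theorem weightedMass_const_mul {c : ℝ≥0∞} (hc : c ≠ ∞) :
    weightedMass a b F (fun z => c * ψ z) = c * weightedMass a b F ψ := by
  rw [weightedMass, weightedMass, ← lintegral_const_mul' _ _ hc]
  simp only [mul_assoc]

theorem lintegral_ell (ν : Measure ℝ) (V : Set ℝ) (hk : Measurable (Function.uncurry k))
    (g : ℝ → ℝ≥0∞) (v : ℝ) :
    ∫⁻ w, g w ∂ell p q k ν V v
      = (∫⁻ w in V, ENNReal.ofReal (p * w * v⁻¹ * k w v) * g w ∂ν) + ENNReal.ofReal q * g v := by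
  rw [ell, lintegral_add_measure, lintegral_withDensity_eq_lintegral_mul_non_measurable _
    (by fun_prop) (ae_of_all _ fun _ => ENNReal.ofReal_lt_top), lintegral_smul_measure,
    lintegral_dirac, smul_eq_mul]
  rfl

theorem _root_.IsBoundaryExtension.timeDensity_le (ha : 0 ≤ a) (hp : 0 ≤ p)
    (hk : Measurable (Function.uncurry k)) (hknn : ∀ w v, 0 ≤ k w v) {f ftil : ℝ × ℝ → ℝ}
    (hext : IsBoundaryExtension b p q k volume (Ioo a b) f ftil) :
    ∀ᵐ z ∂ρ, 0 ≤ z.1 →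
      timeDensity ftil z ≤ ENNReal.ofReal p
          * (∫⁻ w in Ioo a b, ENNReal.ofReal (k w z.2) * timeDensity ftil (z.1 - w⁻¹, w))
        + ENNReal.ofReal q * timeDensity ftil (z.1 - z.2⁻¹, z.2) := by
  have hV : Ioo a b ⊆ Ioi 0 := fun u hu => ha.trans_lt hu.1
  filter_upwards [ae_comp_mul_snd measurableSet_Ioo hV 0 measurableSet_Iio hext.2.2.2,
    ae_snd_mem measurableSet_Ioo] with ⟨σ, u⟩ hbd hu hσ
  have hu0 : 0 < u := hV hu
  have hx : (0 - σ) * u ≤ 0 := by nlinarith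
  obtain ⟨-, hid⟩ := hbd (by simp only [mem_Iio]; linarith) hx
  have harg : ∀ w, 0 < w → 1 + (0 - σ) * u * w * u⁻¹ = -((σ - w⁻¹) * w) := fun w hw => by
    field_simp
    ring
  calc timeDensity ftil (σ, u)
      = ENNReal.ofReal u * ‖∫ w, ftil (1 + (0 - σ) * u * w * u⁻¹, w)
          ∂ell p q k volume (Ioo a b) u‖ₑ := by
        rw [timeDensity, ← hid, zero_sub, neg_mul]
    _ ≤ ENNReal.ofReal u * ∫⁻ w, ‖ftil (1 + (0 - σ) * u * w * u⁻¹, w)‖ₑ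
          ∂ell p q k volume (Ioo a b) u := by
        gcongr
        exact enorm_integral_le_lintegral_enorm _
    _ = _ := by
        rw [lintegral_ell _ _ hk, mul_add, ← lintegral_const_mul' _ _ ENNReal.ofReal_ne_top,
          ← lintegral_const_mul' _ _ ENNReal.ofReal_ne_top, harg u hu0]
        congr 1
        · refine setLIntegral_congr_fun measurableSet_Ioo fun w hw => ?_
          have hw0 : 0 < w := hV hw
          rw [harg w hw0, timeDensity, ← mul_assoc, ← ENNReal.ofReal_mul hu0.le,
            show u * (p * w * u⁻¹ * k w u) = p * (k w u * w) by field_simp,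
            ENNReal.ofReal_mul hp, ENNReal.ofReal_mul (hknn w u)]
          ring
        · rw [timeDensity]
          ring

theorem lintegral_kernel_timeDensity_eq (hk : Measurable (Function.uncurry k))
    (hF : Measurable F) (hψ : Measurable ψ) :
    ∫⁻ z, ψ z * (∫⁻ w in Ioo a b, ENNReal.ofReal (k w z.2) * timeDensity F (z.1 - w⁻¹, w))
        ∂ρ
      = ∫⁻ z, (∫⁻ w in Ioo a b, ENNReal.ofReal (k z.2 w) * ψ (z.1 + z.2⁻¹, w))
          * timeDensity F z ∂ρ := by
  have hD := measurable_timeDensity hF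
  calc _ = ∫⁻ z, (∫⁻ w in Ioo a b,
          ψ (z.1, z.2) * ENNReal.ofReal (k w z.2) * timeDensity F (z.1 - w⁻¹, w))
          ∂ρ := by
        refine lintegral_congr fun z => ?_
        rw [← lintegral_const_mul _ (by fun_prop)]
        simp only [mul_assoc]
    _ = ∫⁻ z, (∫⁻ u in Ioo a b,
          ψ (z.1, u) * ENNReal.ofReal (k z.2 u) * timeDensity F (z.1 - z.2⁻¹, z.2))
          ∂ρ :=
        lintegral_prod_lintegral_comm
          (G := fun x => ψ (x.1, x.2.1) * ENNReal.ofReal (k x.2.2 x.2.1)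
            * timeDensity F (x.1 - x.2.2⁻¹, x.2.2)) (by fun_prop)
    _ = _ := by
        rw [← lintegral_prod_comp_add_fst (by fun_prop) measurable_inv]
        refine lintegral_congr fun z => ?_
        rw [← lintegral_mul_const _ (by fun_prop)]
        simp only [add_sub_cancel_right, mul_comm (ψ _)]

theorem weightedMass_le_weightedMass_transfer (ha : 0 ≤ a) (hp : 0 ≤ p)
    (hk : Measurable (Function.uncurry k)) (hknn : ∀ w v, 0 ≤ k w v) {f ftil : ℝ × ℝ → ℝ}
    (hext : IsBoundaryExtension b p q k volume (Ioo a b) f ftil) (hψ : Measurable ψ)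
    (hψ0 : ∀ z, z.2 ∈ Ioo a b → z.1 < 0 → ψ z = 0) :
    weightedMass a b ftil ψ ≤ weightedMass a b ftil (transfer a b p q k ψ) := by
  have hD := measurable_timeDensity hext.1
  calc weightedMass a b ftil ψ
      ≤ ∫⁻ z, ψ z * (ENNReal.ofReal p
            * (∫⁻ w in Ioo a b, ENNReal.ofReal (k w z.2) * timeDensity ftil (z.1 - w⁻¹, w))
          + ENNReal.ofReal q * timeDensity ftil (z.1 - z.2⁻¹, z.2)) ∂ρ := by
        refine lintegral_mono_ae ?_
        filter_upwards [hext.timeDensity_le ha hp hk hknn,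
          ae_snd_mem measurableSet_Ioo] with z hz hzV
        rcases lt_or_ge z.1 0 with hneg | hnonneg
        · simp [hψ0 z hzV hneg]
        · gcongr
          exact hz hnonneg
    _ = ENNReal.ofReal p * (∫⁻ z, (∫⁻ w in Ioo a b, ENNReal.ofReal (k z.2 w) * ψ (z.1 + z.2⁻¹, w))
            * timeDensity ftil z ∂ρ)
          + ∫⁻ z, ENNReal.ofReal q * ψ (z.1 + z.2⁻¹, z.2) * timeDensity ftil z ∂ρ := by
        simp only [mul_add, mul_left_comm (ψ _)]
        rw [lintegral_add_left (by fun_prop), lintegral_const_mul _ (by fun_prop),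
          lintegral_kernel_timeDensity_eq hk hext.1 hψ]
        congr 1
        rw [← lintegral_prod_comp_add_fst (h := fun u => u⁻¹) (by fun_prop) measurable_inv]
        simp only [add_sub_cancel_right, mul_assoc]
    _ = weightedMass a b ftil (transfer a b p q k ψ) := by
        rw [← lintegral_const_mul _ (by fun_prop), ← lintegral_add_left (by fun_prop)]
        refine lintegral_congr fun z => ?_
        rw [transfer]
        ring

def IsSupersolution (a b p q : ℝ) (k : ℝ → ℝ → ℝ) (ψ Φ : ℝ × ℝ → ℝ≥0∞) : Prop :=
  ∀ z, z.2 ∈ Ioo a b → ψ z + {z | 0 ≤ z.1}.indicator (transfer a b p q k Φ) z ≤ Φ z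

theorem IsSupersolution.transfer_add_transfer_le (h : IsSupersolution a b p q k ψ Φ) {z : ℝ × ℝ}
    (hz : z.2 ∈ Ioo a b) :
    transfer a b p q k ψ z + transfer a b p q k ({z | 0 ≤ z.1}.indicator (transfer a b p q k Φ)) z
      ≤ transfer a b p q k Φ z :=
  (transfer_add_le z).trans (transfer_mono hz fun _ hw => h _ hw)

theorem IsSupersolution.indicator_transfer (h : IsSupersolution a b p q k ψ Φ) :
    IsSupersolution a b p q k ({z | 0 ≤ z.1}.indicator (transfer a b p q k ψ))
      ({z | 0 ≤ z.1}.indicator (transfer a b p q k Φ)) := fun z hz => by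
  by_cases hσ : 0 ≤ z.1
  · simp only [indicator_of_mem (show z ∈ {z : ℝ × ℝ | 0 ≤ z.1} from hσ)]
    exact h.transfer_add_transfer_le hz
  · simp [hσ]

theorem indicator_transfer_eq_zero (ha : 0 ≤ a) {N : ℕ}
    (hsupp : ∀ z, z.2 ∈ Ioo a b → z.1 ∉ Ico 0 ((N + 1 : ℕ) * b⁻¹) → ψ z = 0)
    {z : ℝ × ℝ} (hz : z.2 ∈ Ioo a b) (hzN : z.1 ∉ Ico 0 (N * b⁻¹)) :
    {z | 0 ≤ z.1}.indicator (transfer a b p q k ψ) z = 0 := by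
  by_cases hσ : 0 ≤ z.1
  · rw [indicator_of_mem (show z ∈ {z : ℝ × ℝ | 0 ≤ z.1} from hσ)]
    refine transfer_eq_zero hz fun w hw => hsupp _ hw fun hmem => hzN ⟨hσ, ?_⟩
    have hinv : b⁻¹ < z.2⁻¹ := inv_strictAnti₀ (ha.trans_lt hz.1) hz.2
    push_cast at hmem
    linarith [hmem.2]
  · simp [hσ]

theorem weightedMass_le_of_isSupersolution (ha : 0 ≤ a) (hp : 0 ≤ p)
    (hk : Measurable (Function.uncurry k)) (hknn : ∀ w v, 0 ≤ k w v) {f ftil : ℝ × ℝ → ℝ}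
    (hext : IsBoundaryExtension b p q k volume (Ioo a b) f ftil) (N : ℕ) (hψ : Measurable ψ)
    (hsupp : ∀ z, z.2 ∈ Ioo a b → z.1 ∉ Ico 0 (N * b⁻¹) → ψ z = 0)
    (hsuper : IsSupersolution a b p q k ψ Φ) :
    weightedMass a b ftil ψ
      ≤ weightedMass a b ftil ({z | 0 ≤ z.1}ᶜ.indicator (transfer a b p q k Φ)) := by
  induction N generalizing ψ Φ with
  | zero =>
    rw [weightedMass_eq_zero fun z hz => hsupp z hz (by simp)]
    exact zero_le
  | succ N ih =>
    set S := {z : ℝ × ℝ | 0 ≤ z.1}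
    have hS : MeasurableSet S := measurableSet_le measurable_const measurable_fst
    have hTψ := measurable_transfer (a := a) (b := b) (p := p) (q := q) hk hψ
    calc weightedMass a b ftil ψ
        ≤ weightedMass a b ftil (transfer a b p q k ψ) :=
          weightedMass_le_weightedMass_transfer ha hp hk hknn hext hψ
            fun z hz hneg => hsupp z hz fun hmem => (not_le.2 hneg) hmem.1
      _ = weightedMass a b ftil (S.indicator (transfer a b p q k ψ))
          + weightedMass a b ftil (Sᶜ.indicator (transfer a b p q k ψ)) := by
          rw [← weightedMass_add hext.1 (hTψ.indicator hS), indicator_self_add_compl]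
      _ ≤ weightedMass a b ftil (Sᶜ.indicator (transfer a b p q k (S.indicator
            (transfer a b p q k Φ))))
          + weightedMass a b ftil (Sᶜ.indicator (transfer a b p q k ψ)) := by
          gcongr
          exact ih (hTψ.indicator hS) (fun z hz hzN => indicator_transfer_eq_zero ha hsupp hz hzN)
            hsuper.indicator_transfer
      _ ≤ weightedMass a b ftil (Sᶜ.indicator (transfer a b p q k Φ)) := by
          refine weightedMass_add_le fun z hz => ?_
          by_cases h : z ∈ Sᶜ
          · simp only [indicator_of_mem h]
            rw [add_comm]
            exact hsuper.transfer_add_transfer_le hz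
          · simp [indicator_of_notMem h]

/-- Marks `(σ, u)` when the particle at `-σ u` with velocity `u` lies in `s` after time `c`. -/
noncomputable def positionIndicator (c : ℝ) (s : Set ℝ) : ℝ × ℝ → ℝ≥0∞ :=
  {z | (c - z.1) * z.2 ∈ s}.indicator 1

noncomputable def potential (a p q t : ℝ) (z : ℝ × ℝ) : ℝ≥0∞ :=
  if z.1 ∈ Ico 0 t then ENNReal.ofReal (p + q) ^ ⌊(t - z.1) * a⌋₊ else 0

theorem mul_pow_floor_le {r : ℝ≥0∞} (hr : r ≤ 1) {x y : ℝ} (hy : 0 ≤ y) (h : x ≤ y + 1) :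
    r * r ^ ⌊y⌋₊ ≤ r ^ ⌊x⌋₊ := by
  rw [← pow_succ', ← Nat.floor_add_one hy]
  exact pow_le_pow_right_of_le_one' hr (Nat.floor_le_floor h)

theorem positionIndicator_add_mul_potential_le (hpq : p + q ≤ 1) (ha : 0 < a) {σ u : ℝ}
    (hσ : 0 ≤ σ) (hu : a < u) :
    positionIndicator t (Ioo 0 1) (σ, u) + ENNReal.ofReal (p + q) * potential a p q t (σ + u⁻¹, u)
      ≤ potential a p q t (σ, u) := by
  have hu0 : 0 < u := ha.trans hu
  have hau : a * u⁻¹ ≤ 1 := by simpa only [div_eq_mul_inv] using div_le_one_of_le₀ hu.le hu0.le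
  have hr : ENNReal.ofReal (p + q) ≤ 1 := ENNReal.ofReal_le_one.2 hpq
  by_cases hwin : (t - σ) * u ∈ Ioo 0 1
  · have hσt : σ < t := by nlinarith [hwin.1]
    have hlate : ¬ σ + u⁻¹ < t := by
      have : (t - σ) * u * u⁻¹ < u⁻¹ := by nlinarith [hwin.2, inv_pos.2 hu0]
      rw [mul_assoc, mul_inv_cancel₀ hu0.ne', mul_one] at this
      linarith
    have hfloor : ⌊(t - σ) * a⌋₊ = 0 := Nat.floor_eq_zero.2 (by nlinarith [hwin.2])
    rw [positionIndicator,
      indicator_of_mem (show (σ, u) ∈ {z : ℝ × ℝ | (t - z.1) * z.2 ∈ Ioo 0 1} from hwin)]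
    simp [potential, hσt, hσ, hlate, hfloor]
  · rw [positionIndicator, indicator_of_notMem (show (σ, u) ∉ _ from hwin), zero_add]
    unfold potential
    split_ifs with hnext hnow
    · refine mul_pow_floor_le hr (by nlinarith [hnext.2]) ?_
      nlinarith
    · exact absurd ⟨hσ, by linarith [hnext.2, inv_pos.2 hu0]⟩ hnow
    · simp
    · simp

theorem one_lt_mul_of_inv_le (ha : 0 < a) (ht : a⁻¹ ≤ t) {u : ℝ} (hu : a < u) : 1 < t * u := by
  have hu0 : 0 < u := ha.trans hu
  calc 1 = a⁻¹ * a := (inv_mul_cancel₀ ha.ne').symm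
    _ < a⁻¹ * u := by gcongr
    _ ≤ t * u := by gcongr

theorem isSupersolution_potential (ha : 0 < a) (ht : a⁻¹ ≤ t)
    (hp : 0 ≤ p) (hq : 0 ≤ q) (hpq : p + q ≤ 1) (hk : Measurable (Function.uncurry k))
    (hknn : ∀ w v, 0 ≤ k w v) (hk1 : ∀ w ∈ Ioo a b, ∫ v in Ioo a b, k w v = 1) :
    IsSupersolution a b p q k (positionIndicator t (Ioo 0 1)) (potential a p q t) := by
  rintro ⟨σ, u⟩ hz
  by_cases hσ : 0 ≤ σ
  · rw [indicator_of_mem (show (σ, u) ∈ {z : ℝ × ℝ | 0 ≤ z.1} from hσ)]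
    calc _ ≤ positionIndicator t (Ioo 0 1) (σ, u)
          + ENNReal.ofReal (p + q) * potential a p q t (σ + u⁻¹, u) := by
          gcongr
          exact transfer_le_mul hp hq hk hknn hk1 hz fun _ _ => le_rfl
      _ ≤ _ := positionIndicator_add_mul_potential_le hpq ha hσ hz.1
  · have hout : (σ, u) ∉ {z : ℝ × ℝ | (t - z.1) * z.2 ∈ Ioo 0 1} := fun hmem => by
      have := one_lt_mul_of_inv_le ha ht hz.1
      nlinarith [hmem.2, ha.trans hz.1]
    rw [positionIndicator, indicator_of_notMem hout]
    simp [hσ]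

theorem indicator_transfer_potential_le (ha : 0 < a)
    (hp : 0 ≤ p) (hq : 0 ≤ q) (hpq : p + q ≤ 1) (hk : Measurable (Function.uncurry k))
    (hknn : ∀ w v, 0 ≤ k w v) (hk1 : ∀ w ∈ Ioo a b, ∫ v in Ioo a b, k w v = 1)
    (z : ℝ × ℝ) (hz : z.2 ∈ Ioo a b) :
    {z | 0 ≤ z.1}ᶜ.indicator (transfer a b p q k (potential a p q t)) z
      ≤ ENNReal.ofReal (p + q) ^ ⌊t * a⌋₊ * positionIndicator 0 (Ioc 0 1) z := by
  obtain ⟨σ, u⟩ := z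
  by_cases hσ : 0 ≤ σ
  · simp [hσ]
  have hu0 : 0 < u := ha.trans hz.1
  rw [indicator_of_mem (show (σ, u) ∈ {z : ℝ × ℝ | 0 ≤ z.1}ᶜ from hσ)]
  refine (transfer_le_mul hp hq hk hknn hk1 hz (c := potential a p q t (σ + u⁻¹, u))
    fun _ _ => le_rfl).trans ?_
  unfold potential
  split_ifs with hnext
  · have hinv : u⁻¹ * u = 1 := inv_mul_cancel₀ hu0.ne'
    have hstop : (σ, u) ∈ {z : ℝ × ℝ | (0 - z.1) * z.2 ∈ Ioc 0 1} :=
      ⟨by nlinarith, by nlinarith [hnext.1]⟩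
    have hau : a * u⁻¹ ≤ 1 := by
      simpa only [div_eq_mul_inv] using div_le_one_of_le₀ hz.1.le hu0.le
    rw [positionIndicator, indicator_of_mem hstop, Pi.one_apply, mul_one]
    exact mul_pow_floor_le (ENNReal.ofReal_le_one.2 hpq) (by nlinarith [hnext.2])
      (by nlinarith)
  · simp

theorem measurable_positionIndicator (c : ℝ) {s : Set ℝ} (hs : MeasurableSet s) :
    Measurable (positionIndicator c s) :=
  measurable_one.indicator (hs.preimage (by fun_prop))

theorem weightedMass_positionIndicator (ha : 0 ≤ a) (hF : Measurable F) (c : ℝ) {s : Set ℝ}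
    (hs : MeasurableSet s) :
    weightedMass a b F (positionIndicator c s)
      = ∫⁻ z in s ×ˢ Ioo a b, ‖F (z.1 - c * z.2, z.2)‖ₑ ∂((volume : Measure ℝ).prod volume) := by
  set G := (s ×ˢ univ).indicator fun x : ℝ × ℝ => ‖F (x.1 - c * x.2, x.2)‖ₑ with hG
  calc weightedMass a b F (positionIndicator c s)
      = ∫⁻ z, ENNReal.ofReal z.2 * G ((c - z.1) * z.2, z.2)
          ∂ρ := by
        refine lintegral_congr fun z => ?_
        by_cases h : (c - z.1) * z.2 ∈ s
        · rw [positionIndicator, indicator_of_mem (show z ∈ {z : ℝ × ℝ | (c - z.1) * z.2 ∈ s}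
            from h), hG, indicator_of_mem (mk_mem_prod h (mem_univ _)), timeDensity]
          simp only [Pi.one_apply, one_mul]
          ring_nf
        · rw [positionIndicator, indicator_of_notMem (show z ∉ {z : ℝ × ℝ | (c - z.1) * z.2 ∈ s}
            from h), hG, indicator_of_notMem fun hmem => h (mem_prod.1 hmem).1]
          simp
    _ = ∫⁻ z, G z ∂ρ :=
        lintegral_prod_comp_mul_snd measurableSet_Ioo (fun u hu => ha.trans_lt hu.1) c
          ((by fun_prop : Measurable fun x : ℝ × ℝ => ‖F (x.1 - c * x.2, x.2)‖ₑ).indicator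
            (hs.prod MeasurableSet.univ))
    _ = _ := by
        rw [lintegral_indicator (hs.prod MeasurableSet.univ), prod_restrict_snd,
          Measure.restrict_restrict (hs.prod MeasurableSet.univ), prod_inter_prod, inter_univ,
          univ_inter]

theorem positionIndicator_eq_zero (ha : 0 < a) (ht : a⁻¹ ≤ t) {z : ℝ × ℝ} (hz : z.2 ∈ Ioo a b)
    (hσ : z.1 ∉ Ico 0 (⌈t * b⌉₊ * b⁻¹)) : positionIndicator t (Ioo 0 1) z = 0 := by
  have htσ : t ≤ z.1 ∨ z.1 < 0 := by
    rcases not_and_or.1 hσ with h | h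
    · exact Or.inr (not_le.1 h)
    · refine Or.inl (le_trans ?_ (not_lt.1 h))
      rw [le_mul_inv_iff₀ (ha.trans (hz.1.trans hz.2))]
      exact Nat.le_ceil _
  refine indicator_of_notMem (fun hmem => ?_) _
  have := one_lt_mul_of_inv_le ha ht hz.1
  rcases htσ with h | h <;> nlinarith [hmem.1, hmem.2, ha.trans hz.1]

theorem _root_.IsBoundaryExtension.setLIntegral_enorm_eq {f ftil : ℝ × ℝ → ℝ}
    (hext : IsBoundaryExtension b p q k volume (Ioo a b) f ftil) :
    ∫⁻ z in Ioo 0 1 ×ˢ Ioo a b, ‖ftil z‖ₑ ∂((volume : Measure ℝ).prod volume)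
      = ∫⁻ z in Ioo 0 1 ×ˢ Ioo a b, ‖f z‖ₑ ∂((volume : Measure ℝ).prod volume) := by
  refine setLIntegral_congr_fun_ae (measurableSet_Ioo.prod measurableSet_Ioo) ?_
  have hsub : Ioo (0 : ℝ) 1 ×ˢ Ioo a b ⊆ Iio 1 ×ˢ Ioo a b := prod_mono Ioo_subset_Iio_self le_rfl
  filter_upwards [ae_imp_of_ae_restrict (ae_restrict_of_ae_restrict_of_subset hsub hext.2.2.1)]
    with z hz hmem
  rw [hz hmem hmem.1.1]

theorem lintegral_enorm_comp_sub_le (ha : 0 < a)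
    (hp : 0 ≤ p) (hq : 0 ≤ q) (hpq : p + q ≤ 1) (hk : Measurable (Function.uncurry k))
    (hknn : ∀ w v, 0 ≤ k w v) (hk1 : ∀ w ∈ Ioo a b, ∫ v in Ioo a b, k w v = 1) (ht : a⁻¹ ≤ t)
    {f ftil : ℝ × ℝ → ℝ} (hext : IsBoundaryExtension b p q k volume (Ioo a b) f ftil) :
    ∫⁻ z in Ioo 0 1 ×ˢ Ioo a b, ‖ftil (z.1 - t * z.2, z.2)‖ₑ ∂((volume : Measure ℝ).prod volume)
      ≤ ENNReal.ofReal (p + q) ^ ⌊t * a⌋₊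
          * ∫⁻ z in Ioo 0 1 ×ˢ Ioo a b, ‖f z‖ₑ ∂((volume : Measure ℝ).prod volume) := by
  calc _ = weightedMass a b ftil (positionIndicator t (Ioo 0 1)) :=
        (weightedMass_positionIndicator ha.le hext.1 t measurableSet_Ioo).symm
    _ ≤ weightedMass a b ftil ({z | 0 ≤ z.1}ᶜ.indicator (transfer a b p q k (potential a p q t))) :=
        weightedMass_le_of_isSupersolution ha.le hp hk hknn hext ⌈t * b⌉₊
          (measurable_positionIndicator t measurableSet_Ioo)
          (fun _ hz hσ => positionIndicator_eq_zero ha ht hz hσ)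
          (isSupersolution_potential ha ht hp hq hpq hk hknn hk1)
    _ ≤ weightedMass a b ftil
          (fun z => ENNReal.ofReal (p + q) ^ ⌊t * a⌋₊ * positionIndicator 0 (Ioc 0 1) z) :=
        weightedMass_mono (indicator_transfer_potential_le ha hp hq hpq hk hknn hk1)
    _ = _ := by
        rw [weightedMass_const_mul (ENNReal.pow_ne_top ENNReal.ofReal_ne_top),
          weightedMass_positionIndicator ha.le hext.1 0 measurableSet_Ioc, ← Measure.prod_restrict,
          ← Measure.restrict_congr_set Ioo_ae_eq_Ioc, Measure.prod_restrict]
        simp only [zero_mul, sub_zero, hext.setLIntegral_enorm_eq]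

end BoundaryDecay

theorem stmt12_general
    (a b p q : ℝ)
    (hp : 0 ≤ p) (hq : 0 ≤ q)
    (k : ℝ → ℝ → ℝ) (hkm : Measurable (Function.uncurry k))
    (hknn : ∀ w v : ℝ, 0 ≤ k w v)
    (hk1 : ∀ w ∈ Set.Ioo a b, ∫ v in Set.Ioo a b, k w v = 1)
    (ha0 : 0 < a) (hpq1 : p + q < 1)
    (t : ℝ) (ht : a⁻¹ ≤ t)
    (f ftil : ℝ × ℝ → ℝ)
    (hf : IntegrableOn f ((Set.Ioo (0 : ℝ) 1) ×ˢ Set.Ioo a b)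
      ((volume : Measure ℝ).prod (volume : Measure ℝ)))
    (hext : IsBoundaryExtension b p q k volume (Set.Ioo a b) f ftil) :
    ∫ z in (Set.Ioo (0 : ℝ) 1) ×ˢ Set.Ioo a b, |ftil (z.1 - t * z.2, z.2)|
        ∂((volume : Measure ℝ).prod (volume : Measure ℝ))
      ≤ (p + q) ^ (⌊t * a⌋₊) *
        ∫ z in (Set.Ioo (0 : ℝ) 1) ×ˢ Set.Ioo a b, |f z|
          ∂((volume : Measure ℝ).prod (volume : Measure ℝ)) := by
  have hshift : Measurable fun z : ℝ × ℝ => ftil (z.1 - t * z.2, z.2) := hext.1.comp (by fun_prop)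
  simp only [← Real.norm_eq_abs]
  rw [integral_norm_eq_lintegral_enorm hshift.aestronglyMeasurable,
    integral_norm_eq_lintegral_enorm hf.1]
  calc _ ≤ (ENNReal.ofReal (p + q) ^ ⌊t * a⌋₊
          * ∫⁻ z in Ioo 0 1 ×ˢ Ioo a b, ‖f z‖ₑ ∂((volume : Measure ℝ).prod volume)).toReal :=
        ENNReal.toReal_mono (ENNReal.mul_ne_top (ENNReal.pow_ne_top ENNReal.ofReal_ne_top)
          hf.2.ne) (BoundaryDecay.lintegral_enorm_comp_sub_le ha0 hp hq hpq1.le hkm hknn hk1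
          ht hext)
    _ = _ := by rw [ENNReal.toReal_mul, ENNReal.toReal_pow, ENNReal.toReal_ofReal (by linarith)]

theorem stmt12
    (a b p q : ℝ) (ha : 0 ≤ a) (hab : a < b)
    (hp : 0 ≤ p) (hq : 0 ≤ q) (hpq : 0 < p + q)
    (k : ℝ → ℝ → ℝ) (hkm : Measurable (Function.uncurry k))
    (hknn : ∀ w v : ℝ, 0 ≤ k w v)
    (hk1 : ∀ w ∈ Set.Ioo a b, ∫ v in Set.Ioo a b, k w v = 1)
    (ha0 : 0 < a) (hpq1 : p + q < 1)
    (t : ℝ) (ht : a⁻¹ ≤ t)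
    (f ftil : ℝ × ℝ → ℝ)
    (hf : IntegrableOn f ((Set.Ioo (0 : ℝ) 1) ×ˢ Set.Ioo a b)
      ((volume : Measure ℝ).prod (volume : Measure ℝ)))
    (hext : IsBoundaryExtension b p q k volume (Set.Ioo a b) f ftil) :
    ∫ z in (Set.Ioo (0 : ℝ) 1) ×ˢ Set.Ioo a b, |ftil (z.1 - t * z.2, z.2)|
        ∂((volume : Measure ℝ).prod (volume : Measure ℝ))
      ≤ (p + q) ^ (⌊t * a⌋₊) *
        ∫ z in (Set.Ioo (0 : ℝ) 1) ×ˢ Set.Ioo a b, |f z|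
          ∂((volume : Measure ℝ).prod (volume : Measure ℝ)) :=
  stmt12_general a b p q hp hq k hkm hknn hk1 ha0 hpq1 t ht f ftil hf hext
end

section
/- Assume V = (a,b) with ν the Lebesgue measure and p + q = 1. Let f_⋄ ∈ L¹(V) satisfy f_⋄ ≥ 0 a.e., ∫_V f_⋄(v) dv = 1, and f_⋄(v) = ∫_V k(w,v) f_⋄(w) dw for a.e. v ∈ V, and assume the function v ↦ v⁻¹ f_⋄(v) is integrable on V. Define f_* : Ω → ℝ by f_*(x,v) = v⁻¹ f_⋄(v) / ∫_V w⁻¹ f_⋄(w) dw. Then f_* is a density in L¹(Ω,μ) (f_* ≥ 0 a.e. and ∫_Ω f_* dμ = 1) and T(t) f_* = f_* μ-a.e. on Ω for every t ∈ [0, b⁻¹]. -/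
open MeasureTheory Set Filter Topology

/-- The operator `T(t)` (for `t ∈ [0, b⁻¹]`):
`T(t)f(x,v) = f(x − tv, v)` if `x > tv`, and
`T(t)f(x,v) = ∫_V f(1 + x w v⁻¹ − t w, w) ℓ(dw,v)` if `x ≤ tv`. -/
noncomputable def Tt (p q : ℝ) (k : ℝ → ℝ → ℝ) (ν : Measure ℝ) (V : Set ℝ) (t : ℝ)
    (f : ℝ × ℝ → ℝ) : ℝ × ℝ → ℝ :=
  fun z =>
    if t * z.2 < z.1 then f (z.1 - t * z.2, z.2)
    else ∫ w, f (1 + z.1 * w * z.2⁻¹ - t * w, w) ∂(ell p q k ν V z.2)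

/-!
Since `f_*(x,v) = v⁻¹ f_⋄(v) / C` does not depend on `x`, the transport branch of `T(t)` fixes it
trivially, and the boundary branch reduces to the invariance `∫ f_* dℓ(·,v) = f_*(v)`. On the
absolutely continuous part of `ℓ(·,v)` the factor `w` of the density `p w v⁻¹ k(w,v)` cancels the
`w⁻¹` of `f_*`, leaving `p v⁻¹ ∫ k(w,v) f_⋄(w) dw / C = p f_*(v)` by stationarity of `f_⋄`; the atom
contributes `q f_*(v)`, and `p + q = 1`. The normalization `C = ∫ w⁻¹ f_⋄` is positive because it
is at least `b⁻¹ ∫ f_⋄ = b⁻¹`.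
-/

open scoped ENNReal

section WithDensityOfReal

variable {α : Type*} [MeasurableSpace α] {μ : Measure α} {ρ : α → ℝ}

lemma toReal_ofReal_smul_ae_eq (hρ0 : 0 ≤ᵐ[μ] ρ) (f : α → ℝ) :
    (fun x => (ENNReal.ofReal (ρ x)).toReal • f x) =ᵐ[μ] fun x => ρ x * f x := by
  filter_upwards [hρ0] with x hx
  rw [ENNReal.toReal_ofReal hx, smul_eq_mul]

lemma integrable_withDensity_ofReal_iff (hρ : Measurable ρ) (hρ0 : 0 ≤ᵐ[μ] ρ) {f : α → ℝ} :
    Integrable f (μ.withDensity fun x => ENNReal.ofReal (ρ x)) ↔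
      Integrable (fun x => ρ x * f x) μ := by
  rw [integrable_withDensity_iff_integrable_smul' hρ.ennreal_ofReal
    (.of_forall fun _ => ENNReal.ofReal_lt_top)]
  exact integrable_congr (toReal_ofReal_smul_ae_eq hρ0 f)

lemma integral_withDensity_ofReal (hρ : Measurable ρ) (hρ0 : 0 ≤ᵐ[μ] ρ) (f : α → ℝ) :
    ∫ x, f x ∂μ.withDensity (fun x => ENNReal.ofReal (ρ x)) = ∫ x, ρ x * f x ∂μ := by
  rw [integral_withDensity_eq_integral_toReal_smul hρ.ennreal_ofReal
    (.of_forall fun _ => ENNReal.ofReal_lt_top)]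
  exact integral_congr_ae (toReal_ofReal_smul_ae_eq hρ0 f)

end WithDensityOfReal

section ProdSnd

variable {α β : Type*} [MeasurableSpace α] [MeasurableSpace β] {μ : Measure α} {ν : Measure β}
  [SFinite μ] [SFinite ν] {s : Set α} {t : Set β}

lemma ae_restrict_prod_of_ae_restrict_snd {P : β → Prop} (h : ∀ᵐ y ∂ν.restrict t, P y) :
    ∀ᵐ z ∂(μ.prod ν).restrict (s ×ˢ t), P z.2 := by
  rw [← Measure.prod_restrict]
  exact Measure.quasiMeasurePreserving_snd.ae h

lemma IntegrableOn.comp_snd_prod {g : β → ℝ} (hg : IntegrableOn g t ν) (hs : μ s ≠ ∞) :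
    IntegrableOn (fun z : α × β => g z.2) (s ×ˢ t) (μ.prod ν) := by
  have : IsFiniteMeasure (μ.restrict s) := isFiniteMeasure_restrict.2 hs
  rw [IntegrableOn, ← Measure.prod_restrict]
  exact hg.comp_snd _

lemma setIntegral_prod_comp_snd (g : β → ℝ) :
    ∫ z in s ×ˢ t, g z.2 ∂μ.prod ν = μ.real s * ∫ y in t, g y ∂ν := by
  rw [← Measure.prod_restrict, integral_fun_snd, measureReal_restrict_apply_univ, smul_eq_mul]

end ProdSnd

section Ell

variable {p q : ℝ} {k : ℝ → ℝ → ℝ} {ν : Measure ℝ} {V : Set ℝ} {v : ℝ} {φ : ℝ → ℝ}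

lemma integral_ell_of_integrableOn (hq : 0 ≤ q) (hk : Measurable fun w => k w v)
    (hρ0 : ∀ᵐ w ∂ν.restrict V, 0 ≤ p * w * v⁻¹ * k w v)
    (hφ : IntegrableOn (fun w => p * w * v⁻¹ * k w v * φ w) V ν) :
    ∫ w, φ w ∂ell p q k ν V v = ∫ w in V, p * w * v⁻¹ * k w v * φ w ∂ν + q * φ v := by
  have hρ : Measurable fun w => p * w * v⁻¹ * k w v := by fun_prop
  rw [ell, integral_add_measure ((integrable_withDensity_ofReal_iff hρ hρ0).2 hφ)
    ((integrable_dirac ENNReal.coe_lt_top).smul_measure ENNReal.ofReal_ne_top),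
    integral_withDensity_ofReal hρ hρ0, integral_smul_measure, integral_dirac,
    ENNReal.toReal_ofReal hq, smul_eq_mul]

lemma integral_ell_of_not_integrableOn (hk : Measurable fun w => k w v)
    (hρ0 : ∀ᵐ w ∂ν.restrict V, 0 ≤ p * w * v⁻¹ * k w v)
    (hφ : ¬IntegrableOn (fun w => p * w * v⁻¹ * k w v * φ w) V ν) :
    ∫ w, φ w ∂ell p q k ν V v = 0 := by
  refine integral_undef fun h => hφ ?_
  rw [ell] at h
  exact (integrable_withDensity_ofReal_iff (by fun_prop) hρ0).1 h.left_of_add_measure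

end Ell

lemma integral_ell_inv_mul_div_of_stationary {p q : ℝ} {k : ℝ → ℝ → ℝ} {ν : Measure ℝ}
    {V : Set ℝ} {v : ℝ} {f : ℝ → ℝ} (hp : 0 ≤ p) (hq : 0 ≤ q) (hpq : p + q = 1)
    (hk : Measurable fun w => k w v) (hk0 : ∀ w, 0 ≤ k w v) (hVm : MeasurableSet V)
    (hV : V ⊆ Ioi 0) (hv : 0 < v) (hstat : f v = ∫ w in V, k w v * f w ∂ν) (C : ℝ) :
    ∫ w, w⁻¹ * f w / C ∂ell p q k ν V v = v⁻¹ * f v / C := by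
  have hρ0 : ∀ᵐ w ∂ν.restrict V, 0 ≤ p * w * v⁻¹ * k w v :=
    ae_restrict_of_forall_mem hVm fun w hw => by
      have := hk0 w
      have : 0 < w := hV hw
      positivity
  have hprod : (fun w => p * w * v⁻¹ * k w v * (w⁻¹ * f w / C)) =ᵐ[ν.restrict V]
      fun w => p * v⁻¹ / C * (k w v * f w) :=
    ae_restrict_of_forall_mem hVm fun w hw => by
      have : w ≠ 0 := (hV hw).ne'
      field_simp
  by_cases hint : IntegrableOn (fun w => p * w * v⁻¹ * k w v * (w⁻¹ * f w / C)) V ν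
  · rw [integral_ell_of_integrableOn hq hk hρ0 hint, integral_congr_ae hprod,
      integral_const_mul, ← hstat]
    linear_combination (v⁻¹ * f v / C) * hpq
  · -- the junk value `0` of the undefined integral `∫ k(·,v) f` forces `f v = 0`
    have hkf : ¬IntegrableOn (fun w => k w v * f w) V ν := fun h =>
      hint ((h.const_mul _).congr hprod.symm)
    have hfv : f v = 0 := by rw [hstat, integral_undef hkf]
    rw [integral_ell_of_not_integrableOn hk hρ0 hint, hfv, mul_zero, zero_div]

lemma Tt_eq_self_of_eq_comp_snd {p q t : ℝ} {k : ℝ → ℝ → ℝ} {ν : Measure ℝ} {V : Set ℝ}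
    {f : ℝ × ℝ → ℝ} {g : ℝ → ℝ} (hfg : ∀ z, f z = g z.2) {z : ℝ × ℝ}
    (hz : ∫ w, g w ∂ell p q k ν V z.2 = g z.2) :
    Tt p q k ν V t f z = f z := by
  simp only [Tt, hfg]
  split_ifs
  · rfl
  · exact hz

lemma setIntegral_inv_mul_pos {a b : ℝ} {f : ℝ → ℝ} (ha : 0 ≤ a) (hb : 0 < b)
    (hf0 : ∀ᵐ v ∂(volume : Measure ℝ).restrict (Ioo a b), 0 ≤ f v)
    (hf : IntegrableOn f (Ioo a b)) (hf1 : ∫ v in Ioo a b, f v = 1)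
    (hfinv : IntegrableOn (fun v => v⁻¹ * f v) (Ioo a b)) :
    0 < ∫ v in Ioo a b, v⁻¹ * f v :=
  calc 0 < b⁻¹ := inv_pos.2 hb
    _ = ∫ v in Ioo a b, b⁻¹ * f v := by rw [integral_const_mul, hf1, mul_one]
    _ ≤ ∫ v in Ioo a b, v⁻¹ * f v := by
      refine integral_mono_ae (hf.const_mul b⁻¹) hfinv ?_
      filter_upwards [hf0, ae_restrict_mem measurableSet_Ioo] with v hfv hv
      exact mul_le_mul_of_nonneg_right (inv_anti₀ (ha.trans_lt hv.1) hv.2.le) hfv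

theorem stmt15_general
    (a b p q : ℝ) (ha : 0 ≤ a) (hab : a < b)
    (hp : 0 ≤ p) (hq : 0 ≤ q)
    (k : ℝ → ℝ → ℝ) (hkm : Measurable (Function.uncurry k))
    (hknn : ∀ w v : ℝ, 0 ≤ k w v)
    (hpq1 : p + q = 1)
    (fd : ℝ → ℝ)
    (hfdnn : ∀ᵐ v ∂((volume : Measure ℝ).restrict (Set.Ioo a b)), 0 ≤ fd v)
    (hfdint : IntegrableOn fd (Set.Ioo a b))
    (hfd1 : ∫ v in Set.Ioo a b, fd v = 1)
    (hfdstat : ∀ᵐ v ∂((volume : Measure ℝ).restrict (Set.Ioo a b)),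
      fd v = ∫ w in Set.Ioo a b, k w v * fd w)
    (hfdinv : IntegrableOn (fun v : ℝ => v⁻¹ * fd v) (Set.Ioo a b))
    (fstar : ℝ × ℝ → ℝ)
    (hfstar : ∀ z : ℝ × ℝ,
      fstar z = z.2⁻¹ * fd z.2 / ∫ w in Set.Ioo a b, w⁻¹ * fd w) :
    IntegrableOn fstar ((Set.Ioo (0 : ℝ) 1) ×ˢ Set.Ioo a b)
        ((volume : Measure ℝ).prod (volume : Measure ℝ)) ∧
    (∀ᵐ z ∂(((volume : Measure ℝ).prod (volume : Measure ℝ)).restrict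
        ((Set.Ioo (0 : ℝ) 1) ×ˢ Set.Ioo a b)), 0 ≤ fstar z) ∧
    (∫ z in (Set.Ioo (0 : ℝ) 1) ×ˢ Set.Ioo a b, fstar z
        ∂((volume : Measure ℝ).prod (volume : Measure ℝ)) = 1) ∧
    (∀ t : ℝ, 0 ≤ t → t ≤ b⁻¹ →
      ∀ᵐ z ∂(((volume : Measure ℝ).prod (volume : Measure ℝ)).restrict
          ((Set.Ioo (0 : ℝ) 1) ×ˢ Set.Ioo a b)),
        Tt p q k volume (Set.Ioo a b) t fstar z = fstar z) := by
  set C := ∫ w in Ioo a b, w⁻¹ * fd w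
  have hC : 0 < C := setIntegral_inv_mul_pos ha (ha.trans_lt hab) hfdnn hfdint hfd1 hfdinv
  set g : ℝ → ℝ := fun v => v⁻¹ * fd v / C
  obtain rfl : fstar = fun z => g z.2 := funext hfstar
  have hV : Ioo a b ⊆ Ioi 0 := fun v hv => ha.trans_lt hv.1
  refine ⟨IntegrableOn.comp_snd_prod (hfdinv.div_const C) (by simp), ?_, ?_, ?_⟩
  · filter_upwards [ae_restrict_prod_of_ae_restrict_snd hfdnn,
      ae_restrict_prod_of_ae_restrict_snd (ae_restrict_mem measurableSet_Ioo)] with z hz hzV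
    have : 0 < z.2 := hV hzV
    positivity
  · rw [setIntegral_prod_comp_snd, Real.volume_real_Ioo_of_le zero_le_one, integral_div,
      div_self hC.ne']
    norm_num
  · intro t _ _
    filter_upwards [ae_restrict_prod_of_ae_restrict_snd hfdstat,
      ae_restrict_prod_of_ae_restrict_snd (ae_restrict_mem measurableSet_Ioo)] with z hz hzV
    exact Tt_eq_self_of_eq_comp_snd (fun _ => rfl) <|
      integral_ell_inv_mul_div_of_stationary hp hq hpq1 (by fun_prop) (hknn · z.2)
        measurableSet_Ioo hV (hV hzV) hz C

theorem stmt15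
    (a b p q : ℝ) (ha : 0 ≤ a) (hab : a < b)
    (hp : 0 ≤ p) (hq : 0 ≤ q) (hpq : 0 < p + q)
    (k : ℝ → ℝ → ℝ) (hkm : Measurable (Function.uncurry k))
    (hknn : ∀ w v : ℝ, 0 ≤ k w v)
    (hk1 : ∀ w ∈ Set.Ioo a b, ∫ v in Set.Ioo a b, k w v = 1)
    (hpq1 : p + q = 1)
    (fd : ℝ → ℝ) (hfdm : Measurable fd)
    (hfdnn : ∀ᵐ v ∂((volume : Measure ℝ).restrict (Set.Ioo a b)), 0 ≤ fd v)
    (hfdint : IntegrableOn fd (Set.Ioo a b))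
    (hfd1 : ∫ v in Set.Ioo a b, fd v = 1)
    (hfdstat : ∀ᵐ v ∂((volume : Measure ℝ).restrict (Set.Ioo a b)),
      fd v = ∫ w in Set.Ioo a b, k w v * fd w)
    (hfdinv : IntegrableOn (fun v : ℝ => v⁻¹ * fd v) (Set.Ioo a b))
    (fstar : ℝ × ℝ → ℝ)
    (hfstar : ∀ z : ℝ × ℝ,
      fstar z = z.2⁻¹ * fd z.2 / ∫ w in Set.Ioo a b, w⁻¹ * fd w) :
    IntegrableOn fstar ((Set.Ioo (0 : ℝ) 1) ×ˢ Set.Ioo a b)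
        ((volume : Measure ℝ).prod (volume : Measure ℝ)) ∧
    (∀ᵐ z ∂(((volume : Measure ℝ).prod (volume : Measure ℝ)).restrict
        ((Set.Ioo (0 : ℝ) 1) ×ˢ Set.Ioo a b)), 0 ≤ fstar z) ∧
    (∫ z in (Set.Ioo (0 : ℝ) 1) ×ˢ Set.Ioo a b, fstar z
        ∂((volume : Measure ℝ).prod (volume : Measure ℝ)) = 1) ∧
    (∀ t : ℝ, 0 ≤ t → t ≤ b⁻¹ →
      ∀ᵐ z ∂(((volume : Measure ℝ).prod (volume : Measure ℝ)).restrict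
          ((Set.Ioo (0 : ℝ) 1) ×ˢ Set.Ioo a b)),
        Tt p q k volume (Set.Ioo a b) t fstar z = fstar z) :=
  stmt15_general a b p q ha hab hp hq k hkm hknn hpq1 fd hfdnn hfdint hfd1 hfdstat hfdinv fstar
    hfstar
end

section
/- Suppose there exists a stationary density f_⋄ for the kernel k which is strictly positive almost everywhere on V and is unique up to a.e. equality (every stationary density for k equals f_⋄ a.e.). Then for every Lebesgue-measurable set U ⊂ V with leb(U) > 0 and leb(V ∖ U) > 0 one has ∫_{V∖U} ∫_U k(w,v) dv dw > 0. -/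
/-!
Suppose no mass flows from `B = V \ U` into `U`. Then everything that leaves `B` lands in `B`,
and by stationarity this already accounts for all the mass of `f_⋄` on `B`, so nothing flows
from `U` into `B` either. Hence `f_⋄` restricted to `U` is stationary by itself, and after
normalisation it is a second stationary density, vanishing on `B` where `f_⋄ > 0`: this
contradicts uniqueness. The fluxes are `ℝ≥0∞`-valued lower integrals, so the bookkeeping needs
no integrability side conditions.
-/

open MeasureTheory Set
open scoped ENNReal

/-- A stationary density for the kernel `k` on `V = (a,b)`: a measurable
function `f : V → [0,∞)` with `∫_V f = 1` and `f(v) = ∫_V k(w,v) f(w) dw`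
for almost every `v ∈ V`. -/
def IsStationaryDensity (a b : ℝ) (k : ℝ → ℝ → ℝ) (f : ℝ → ℝ) : Prop :=
  Measurable f ∧ (∀ v : ℝ, 0 ≤ f v) ∧
  (∫ v in Set.Ioo a b, f v) = 1 ∧
  ∀ᵐ v ∂((volume : Measure ℝ).restrict (Set.Ioo a b)),
    f v = ∫ w in Set.Ioo a b, k w v * f w

section

variable {α : Type*} [MeasurableSpace α] {μ : Measure α} {U V : Set α}
  {k : α → α → ℝ} {f : α → ℝ}

def IsStationaryDensityOn (μ : Measure α) (V : Set α) (k : α → α → ℝ) (f : α → ℝ) : Prop :=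
  Measurable f ∧ (∀ v, 0 ≤ f v) ∧ (∫ v in V, f v ∂μ) = 1 ∧
  ∀ᵐ v ∂μ.restrict V, f v = ∫ w in V, k w v * f w ∂μ

noncomputable def inflow (μ : Measure α) (k : α → α → ℝ) (f : α → ℝ) (S : Set α) (v : α) :
    ℝ≥0∞ :=
  ∫⁻ w in S, ENNReal.ofReal (k w v * f w) ∂μ

lemma ofReal_integral_eq_lintegral_ofReal_of_ne_zero {g : α → ℝ} (hg : 0 ≤ᵐ[μ] g)
    (h : ∫ x, g x ∂μ ≠ 0) :
    ENNReal.ofReal (∫ x, g x ∂μ) = ∫⁻ x, ENNReal.ofReal (g x) ∂μ :=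
  ofReal_integral_eq_lintegral_ofReal (.of_integral_ne_zero h) hg

lemma lintegral_ofReal_eq_one {g : α → ℝ} (hg : 0 ≤ᵐ[μ] g) (h : ∫ x, g x ∂μ = 1) :
    ∫⁻ x, ENNReal.ofReal (g x) ∂μ = 1 := by
  rw [← ofReal_integral_eq_lintegral_ofReal (integrable_of_integral_eq_one h) hg, h,
    ENNReal.ofReal_one]

lemma setIntegral_pos_of_ae_pos {s : Set α} {g : α → ℝ} (hgi : IntegrableOn g s μ)
    (hg : ∀ᵐ x ∂μ.restrict s, 0 < g x) (hs : μ s ≠ 0) : 0 < ∫ x in s, g x ∂μ := by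
  rw [integral_pos_iff_support_of_nonneg_ae (hg.mono fun _ hx ↦ hx.le) hgi, pos_iff_ne_zero]
  intro hsupp
  refine hs (ae_restrict_eq_bot.1 (Filter.eventually_false_iff_eq_bot.1 ?_))
  filter_upwards [hg, measure_eq_zero_iff_ae_notMem.1 hsupp] with x hpos hx
  exact hx hpos.ne'

lemma measurable_inflow [SFinite μ] (hk : Measurable (Function.uncurry k)) (hf : Measurable f)
    (S : Set α) : Measurable (inflow μ k f S) :=
  (((hk.comp measurable_swap).mul (hf.comp measurable_snd)).ennreal_ofReal).lintegral_prod_right'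

lemma setLIntegral_inflow [SFinite μ] (hk : Measurable (Function.uncurry k))
    (hknn : ∀ w v, 0 ≤ k w v) (hf : Measurable f) (S T : Set α) :
    ∫⁻ v in T, inflow μ k f S v ∂μ =
      ∫⁻ w in S, (∫⁻ v in T, ENNReal.ofReal (k w v) ∂μ) * ENNReal.ofReal (f w) ∂μ := by
  unfold inflow
  rw [lintegral_lintegral_swap
    (((hk.comp measurable_swap).mul (hf.comp measurable_snd)).ennreal_ofReal).aemeasurable]
  simp only [ENNReal.ofReal_mul (hknn _ _)]
  congr! 2 with w
  exact lintegral_mul_const' _ _ ENNReal.ofReal_ne_top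

lemma IsStationaryDensityOn.ofReal_ae_eq_inflow (hf : IsStationaryDensityOn μ V k f)
    (hknn : ∀ w v, 0 ≤ k w v) (hfpos : ∀ᵐ v ∂μ.restrict V, 0 < f v) :
    ∀ᵐ v ∂μ.restrict V, ENNReal.ofReal (f v) = inflow μ k f V v := by
  filter_upwards [hf.2.2.2, hfpos] with v hv hvpos
  rw [hv]
  exact ofReal_integral_eq_lintegral_ofReal_of_ne_zero
    (ae_of_all _ fun w ↦ mul_nonneg (hknn w v) (hf.2.1 w)) (hv ▸ hvpos.ne')

lemma setLIntegral_eq_add_sdiff (hU : MeasurableSet U) (hUV : U ⊆ V) (g : α → ℝ≥0∞) :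
    ∫⁻ v in V, g v ∂μ = ∫⁻ v in U, g v ∂μ + ∫⁻ v in V \ U, g v ∂μ := by
  rw [← lintegral_inter_add_sdiff g V hU, inter_eq_right.2 hUV]

lemma inflow_eq_add_sdiff (hU : MeasurableSet U) (hUV : U ⊆ V) :
    inflow μ k f V = inflow μ k f U + inflow μ k f (V \ U) :=
  funext fun _ ↦ setLIntegral_eq_add_sdiff hU hUV _

section NoLeak

variable [SFinite μ] (hk : Measurable (Function.uncurry k)) (hknn : ∀ w v, 0 ≤ k w v)
  (hleak : ∀ᵐ w ∂μ.restrict (V \ U), ∫⁻ v in U, ENNReal.ofReal (k w v) ∂μ = 0)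
include hk hknn hleak

lemma inflow_sdiff_ae_eq_zero (hf : Measurable f) :
    inflow μ k f (V \ U) =ᵐ[μ.restrict U] 0 := by
  refine (lintegral_eq_zero_iff (measurable_inflow hk hf _)).1 ?_
  rw [setLIntegral_inflow hk hknn hf]
  refine (lintegral_congr_ae ?_).trans lintegral_zero
  filter_upwards [hleak] with w hw
  rw [hw, zero_mul]

lemma inflow_ae_eq_zero_on_sdiff (hV : MeasurableSet V) (hU : MeasurableSet U) (hUV : U ⊆ V)
    (hf : IsStationaryDensityOn μ V k f)
    (hfpos : ∀ᵐ v ∂μ.restrict V, 0 < f v) (hk1 : ∀ w ∈ V \ U, ∫ v in V, k w v ∂μ = 1) :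
    inflow μ k f U =ᵐ[μ.restrict (V \ U)] 0 := by
  -- all the mass leaving `V \ U` stays in `V \ U` ...
  have hstay : ∫⁻ v in V \ U, inflow μ k f (V \ U) v ∂μ =
      ∫⁻ w in V \ U, ENNReal.ofReal (f w) ∂μ := by
    have htotal : ∫⁻ v in V, inflow μ k f (V \ U) v ∂μ =
        ∫⁻ w in V \ U, ENNReal.ofReal (f w) ∂μ := by
      rw [setLIntegral_inflow hk hknn hf.1]
      refine setLIntegral_congr_fun (hV.diff hU) fun w hw ↦ ?_
      rw [lintegral_ofReal_eq_one (ae_of_all _ (hknn w)) (hk1 w hw), one_mul]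
    rw [← htotal, setLIntegral_eq_add_sdiff hU hUV,
      lintegral_congr_ae (inflow_sdiff_ae_eq_zero hk hknn hleak hf.1), lintegral_zero_fun, zero_add]
  -- ... and by stationarity that already accounts for all the mass of `f` on `V \ U`.
  have hbalance :
      ∫⁻ v in V \ U, inflow μ k f U v ∂μ + ∫⁻ v in V \ U, inflow μ k f (V \ U) v ∂μ =
        ∫⁻ v in V \ U, ENNReal.ofReal (f v) ∂μ := by
    rw [← lintegral_add_left (measurable_inflow hk hf.1 _)]
    refine lintegral_congr_ae ?_
    filter_upwards [ae_restrict_of_ae_restrict_of_subset sdiff_subset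
      (hf.ofReal_ae_eq_inflow hknn hfpos)] with v hv
    rw [hv, inflow_eq_add_sdiff hU hUV, Pi.add_apply]
  rw [hstay] at hbalance
  have hfinite : ∫⁻ v in V \ U, ENNReal.ofReal (f v) ∂μ ≠ ∞ := by
    refine ne_top_of_le_ne_top ENNReal.one_ne_top ?_
    rw [← lintegral_ofReal_eq_one (ae_of_all _ hf.2.1) hf.2.2.1, setLIntegral_eq_add_sdiff hU hUV]
    exact le_add_self
  refine (lintegral_eq_zero_iff (measurable_inflow hk hf.1 _)).1 ?_
  exact (ENNReal.add_left_inj hfinite).1 (hbalance.trans (zero_add _).symm)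

end NoLeak

lemma IsStationaryDensityOn.indicator_div (hV : MeasurableSet V) (hU : MeasurableSet U)
    (hUV : U ⊆ V) (hk : Measurable (Function.uncurry k)) (hknn : ∀ w v, 0 ≤ k w v)
    (hf : IsStationaryDensityOn μ V k f) (hc : 0 < ∫ v in U, f v ∂μ)
    (hclosed : ∀ᵐ v ∂μ.restrict U, ENNReal.ofReal (f v) = inflow μ k f U v)
    (hout : inflow μ k f U =ᵐ[μ.restrict (V \ U)] 0) :
    IsStationaryDensityOn μ V k (U.indicator fun v ↦ f v / ∫ w in U, f w ∂μ) := by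
  set c := ∫ w in U, f w ∂μ
  have hrhs (v : α) :
      ∫ w in V, k w v * U.indicator (fun w ↦ f w / c) w ∂μ = (inflow μ k f U v).toReal / c := by
    simp only [← indicator_mul_right U (k · v), ← mul_div_assoc]
    rw [setIntegral_indicator hU, inter_eq_right.2 hUV, integral_div,
      integral_eq_lintegral_of_nonneg_ae (ae_of_all _ fun w ↦ mul_nonneg (hknn w v) (hf.2.1 w))
        ((hk.of_uncurry_right.mul hf.1).aestronglyMeasurable), inflow]
  refine ⟨(hf.1.div_const c).indicator hU,
    indicator_nonneg fun v _ ↦ div_nonneg (hf.2.1 v) hc.le, ?_, ?_⟩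
  · rw [setIntegral_indicator hU, inter_eq_right.2 hUV, integral_div, div_self hc.ne']
  suffices h : ∀ᵐ v ∂μ.restrict (U ∪ V \ U),
      U.indicator (fun w ↦ f w / c) v = ∫ w in V, k w v * U.indicator (fun w ↦ f w / c) w ∂μ by
    rwa [union_sdiff_cancel hUV] at h
  rw [ae_restrict_union_iff]
  constructor
  · filter_upwards [ae_restrict_mem hU, hclosed] with v hv hfv
    rw [hrhs, indicator_of_mem hv, ← hfv, ENNReal.toReal_ofReal (hf.2.1 v)]
  · filter_upwards [ae_restrict_mem (hV.diff hU), hout] with v hv hv0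
    rw [hrhs, indicator_of_notMem hv.2, hv0, Pi.zero_apply, ENNReal.toReal_zero, zero_div]

lemma ae_setLIntegral_ofReal_eq_zero_of_setIntegral_nonpos [SFinite μ] {B : Set α}
    (hk : Measurable (Function.uncurry k)) (hknn : ∀ w v, 0 ≤ k w v) (hB : MeasurableSet B)
    (hBfin : μ B ≠ ∞) (hUV : U ⊆ V) (hk1 : ∀ w ∈ B, ∫ v in V, k w v ∂μ = 1)
    (h : ∫ w in B, ∫ v in U, k w v ∂μ ∂μ ≤ 0) :
    ∀ᵐ w ∂μ.restrict B, ∫⁻ v in U, ENNReal.ofReal (k w v) ∂μ = 0 := by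
  have hkV (w : α) (hw : w ∈ B) : IntegrableOn (k w) V μ :=
    integrable_of_integral_eq_one (hk1 w hw)
  have hle_one : ∀ᵐ w ∂μ.restrict B, ‖∫ v in U, k w v ∂μ‖ ≤ 1 := by
    filter_upwards [ae_restrict_mem hB] with w hw
    rw [Real.norm_of_nonneg (integral_nonneg (hknn w)), ← hk1 w hw]
    exact setIntegral_mono_set (hkV w hw) (ae_of_all _ (hknn w)) hUV.eventuallyLE
  have : IsFiniteMeasure (μ.restrict B) := isFiniteMeasure_restrict.2 hBfin
  have hint : IntegrableOn (fun w ↦ ∫ v in U, k w v ∂μ) B μ :=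
    (integrable_const 1).mono' hk.stronglyMeasurable.integral_prod_right'.aestronglyMeasurable
      hle_one
  have hzero := (integral_eq_zero_iff_of_nonneg (fun w ↦ integral_nonneg (hknn w)) hint).1
    (h.antisymm (integral_nonneg fun w ↦ integral_nonneg (hknn w)))
  filter_upwards [hzero, ae_restrict_mem hB] with w hw0 hw
  rw [← ofReal_integral_eq_lintegral_ofReal ((hkV w hw).mono_set hUV) (ae_of_all _ (hknn w))]
  simp only [hw0, Pi.zero_apply, ENNReal.ofReal_zero]

theorem setIntegral_sdiff_setIntegral_pos_of_unique [SFinite μ] (hV : MeasurableSet V)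
    (hVfin : μ V ≠ ∞) (hk : Measurable (Function.uncurry k)) (hknn : ∀ w v, 0 ≤ k w v)
    (hk1 : ∀ w ∈ V, ∫ v in V, k w v ∂μ = 1) (hf : IsStationaryDensityOn μ V k f)
    (hfpos : ∀ᵐ v ∂μ.restrict V, 0 < f v)
    (huniq : ∀ g, IsStationaryDensityOn μ V k g → g =ᵐ[μ.restrict V] f)
    (hU : MeasurableSet U) (hUV : U ⊆ V) (hUpos : μ U ≠ 0) (hBpos : μ (V \ U) ≠ 0) :
    0 < ∫ w in V \ U, ∫ v in U, k w v ∂μ ∂μ := by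
  by_contra! hnpos
  have hk1' : ∀ w ∈ V \ U, ∫ v in V, k w v ∂μ = 1 := fun w hw ↦ hk1 w hw.1
  have hleak := ae_setLIntegral_ofReal_eq_zero_of_setIntegral_nonpos hk hknn (hV.diff hU)
    (ne_top_of_le_ne_top hVfin (measure_mono sdiff_subset)) hUV hk1' hnpos
  have hclosed : ∀ᵐ v ∂μ.restrict U, ENNReal.ofReal (f v) = inflow μ k f U v := by
    filter_upwards [ae_restrict_of_ae_restrict_of_subset hUV (hf.ofReal_ae_eq_inflow hknn hfpos),
      inflow_sdiff_ae_eq_zero hk hknn hleak hf.1] with v hv hv0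
    rw [hv, inflow_eq_add_sdiff hU hUV, Pi.add_apply, hv0, Pi.zero_apply, add_zero]
  have hc : 0 < ∫ v in U, f v ∂μ :=
    setIntegral_pos_of_ae_pos
      (IntegrableOn.mono_set (integrable_of_integral_eq_one hf.2.2.1) hUV)
      (ae_restrict_of_ae_restrict_of_subset hUV hfpos) hUpos
  have hg := hf.indicator_div hV hU hUV hk hknn hc hclosed
    (inflow_ae_eq_zero_on_sdiff hk hknn hleak hV hU hUV hf hfpos hk1')
  refine hBpos (ae_restrict_eq_bot.1 (Filter.eventually_false_iff_eq_bot.1 ?_))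
  filter_upwards [ae_restrict_mem (hV.diff hU),
    ae_restrict_of_ae_restrict_of_subset sdiff_subset ((huniq _ hg).and hfpos)] with v hv hgv
  rw [indicator_of_notMem hv.2] at hgv
  exact hgv.2.ne hgv.1

end

theorem stmt19_general
    (a b : ℝ)
    (k : ℝ → ℝ → ℝ) (hkm : Measurable (Function.uncurry k))
    (hknn : ∀ w v : ℝ, 0 ≤ k w v)
    (hk1 : ∀ w ∈ Set.Ioo a b, ∫ v in Set.Ioo a b, k w v = 1)
    (fd : ℝ → ℝ) (hfd : IsStationaryDensity a b k fd)
    (hfdpos : ∀ᵐ v ∂((volume : Measure ℝ).restrict (Set.Ioo a b)), 0 < fd v)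
    (hfduniq : ∀ g : ℝ → ℝ, IsStationaryDensity a b k g →
      g =ᵐ[(volume : Measure ℝ).restrict (Set.Ioo a b)] fd) :
    ∀ U : Set ℝ, U ⊆ Set.Ioo a b → MeasurableSet U →
      0 < volume U → 0 < volume (Set.Ioo a b \ U) →
      0 < ∫ w in Set.Ioo a b \ U, (∫ v in U, k w v) := fun _U hUV hU hUpos hBpos ↦
  setIntegral_sdiff_setIntegral_pos_of_unique measurableSet_Ioo measure_Ioo_lt_top.ne hkm hknn hk1
    hfd hfdpos hfduniq hU hUV hUpos.ne' hBpos.ne'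

theorem stmt19
    (a b : ℝ) (ha : 0 ≤ a) (hab : a < b)
    (k : ℝ → ℝ → ℝ) (hkm : Measurable (Function.uncurry k))
    (hknn : ∀ w v : ℝ, 0 ≤ k w v)
    (hk1 : ∀ w ∈ Set.Ioo a b, ∫ v in Set.Ioo a b, k w v = 1)
    (fd : ℝ → ℝ) (hfd : IsStationaryDensity a b k fd)
    (hfdpos : ∀ᵐ v ∂((volume : Measure ℝ).restrict (Set.Ioo a b)), 0 < fd v)
    (hfduniq : ∀ g : ℝ → ℝ, IsStationaryDensity a b k g →
      g =ᵐ[(volume : Measure ℝ).restrict (Set.Ioo a b)] fd) :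
    ∀ U : Set ℝ, U ⊆ Set.Ioo a b → MeasurableSet U →
      0 < volume U → 0 < volume (Set.Ioo a b \ U) →
      0 < ∫ w in Set.Ioo a b \ U, (∫ v in U, k w v) :=
  stmt19_general a b k hkm hknn hk1 fd hfd hfdpos hfduniq
end
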